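/- arXiv:1504.07411 — 6 statements merged into one kernel-verified Lean document; each statement's English description precedes it below -/
import Mathlib

section
/- For any subsets A, B of the nonnegative integers enumerated increasingly as A = {a_1 < a_2 < ...} and B = {b_1 < b_2 < ...}, and any x, we have s_B(x) ≤ s_A(x + 2·d_{A,B}(x)) · (4·d_{A,B}(x) + 1), where R_A(n) = #{(i,j) : i ≤ j, a_i + a_j = n}, s_A(x) = max_{n ≤ x} R_A(n), and d_{A,B}(x) = max over indices t with a_t ≤ x or b_t ≤ x of |a_t − b_t|. -/
open Filter

/-- Number of representations of `n` as `a i + a j`, `i ≤ j` (indices into the sequence `a`).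
Since `a` is strictly increasing in all uses, `a i ≥ i`, so indices are bounded by `n`. -/
def Rf (a : ℕ → ℕ) (n : ℕ) : ℕ :=
  ((Finset.range (n+1) ×ˢ Finset.range (n+1)).filter
    (fun p => p.1 ≤ p.2 ∧ a p.1 + a p.2 = n)).card

/-- `s_A(x) = max_{n ≤ x} R_A(n)`. -/
def sf (a : ℕ → ℕ) (x : ℕ) : ℕ := (Finset.range (x+1)).sup (Rf a)

/-- `d_{A,B}(x) = max_{t : a_t ≤ x ∨ b_t ≤ x} |a_t - b_t|`. For strictly increasing
sequences any such index `t` satisfies `t ≤ x`. -/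
def df (a b : ℕ → ℕ) (x : ℕ) : ℕ :=
  (Finset.range (x+1)).sup (fun t => if a t ≤ x ∨ b t ≤ x then Nat.dist (a t) (b t) else 0)

/-- Number of representations of `n` as `p + q` with `p ≤ q`, `p, q ∈ A`. -/
noncomputable def RS (A : Set ℕ) (n : ℕ) : ℕ :=
  Nat.card {p : ℕ × ℕ // p.1 ∈ A ∧ p.2 ∈ A ∧ p.1 ≤ p.2 ∧ p.1 + p.2 = n}

/-- `s_A(x) = max_{n ≤ x} R_A(n)` for a set `A`. -/
noncomputable def sS (A : Set ℕ) (x : ℕ) : ℕ := (Finset.range (x+1)).sup (RS A)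

/-!
Each representation `n = b_i + b_j` with `n ≤ x` only involves terms `b_i, b_j ≤ x`, so
`|a_i - b_i|, |a_j - b_j| ≤ d := d_{A,B}(x)` and `a_i + a_j` lies in `[n - 2d, n + 2d]`.
Sorting the representations of `n` by the value of `a_i + a_j` gives at most `4d + 1` classes,
each of which is a set of representations of one `m ≤ x + 2d` by `A`, hence of size at most
`s_A(x + 2d)`.
-/

theorem card_le_Rf {a : ℕ → ℕ} (ha : StrictMono a) {m : ℕ} {s : Finset (ℕ × ℕ)}
    (hs : ∀ p ∈ s, p.1 ≤ p.2 ∧ a p.1 + a p.2 = m) : s.card ≤ Rf a m := by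
  refine Finset.card_le_card fun p hp => ?_
  obtain ⟨hle, hsum⟩ := hs p hp
  have h1 : p.1 ≤ m := ha.le_apply.trans (hsum ▸ Nat.le_add_right _ _)
  have h2 : p.2 ≤ m := ha.le_apply.trans (hsum ▸ Nat.le_add_left _ _)
  simp only [Finset.mem_filter, Finset.mem_product, Finset.mem_range]
  omega

theorem Rf_le_sf (a : ℕ → ℕ) {n x : ℕ} (h : n ≤ x) : Rf a n ≤ sf a x :=
  Finset.le_sup (Finset.mem_range.mpr (Nat.lt_succ_of_le h))

theorem dist_le_df {a b : ℕ → ℕ} (hb : StrictMono b) {x i : ℕ} (hi : b i ≤ x) :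
    Nat.dist (a i) (b i) ≤ df a b x := by
  have h := Finset.le_sup (f := fun t => if a t ≤ x ∨ b t ≤ x then Nat.dist (a t) (b t) else 0)
    (Finset.mem_range.mpr (Nat.lt_succ_of_le (hb.le_apply.trans hi)))
  simp only [hi, or_true, if_true] at h
  exact h

theorem add_mem_Icc_of_dist_le {a b : ℕ → ℕ} {i j n d : ℕ} (hn : b i + b j = n)
    (hi : Nat.dist (a i) (b i) ≤ d) (hj : Nat.dist (a j) (b j) ≤ d) :
    a i + a j ∈ Finset.Icc (n - 2 * d) (n + 2 * d) := by
  unfold Nat.dist at hi hj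
  rw [Finset.mem_Icc]
  omega

theorem Rf_le_of_dist_le {a b : ℕ → ℕ} (ha : StrictMono a) {n d M : ℕ}
    (hd : ∀ i, b i ≤ n → Nat.dist (a i) (b i) ≤ d) (hM : ∀ m ≤ n + 2 * d, Rf a m ≤ M) :
    Rf b n ≤ (4 * d + 1) * M := by
  set S := (Finset.range (n+1) ×ˢ Finset.range (n+1)).filter
    (fun p => p.1 ≤ p.2 ∧ b p.1 + b p.2 = n)
  have hsum_mem : ∀ p ∈ S, a p.1 + a p.2 ∈ Finset.Icc (n - 2 * d) (n + 2 * d) := by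
    intro p hp
    obtain ⟨-, -, hsum⟩ := Finset.mem_filter.mp hp
    exact add_mem_Icc_of_dist_le hsum (hd _ (hsum ▸ Nat.le_add_right _ _))
      (hd _ (hsum ▸ Nat.le_add_left _ _))
  have hfibre : ∀ m ∈ Finset.Icc (n - 2 * d) (n + 2 * d),
      (S.filter fun p => a p.1 + a p.2 = m).card ≤ M := by
    intro m hm
    refine (card_le_Rf ha fun p hp => ?_).trans (hM m (Finset.mem_Icc.mp hm).2)
    obtain ⟨hpS, hm'⟩ := Finset.mem_filter.mp hp
    exact ⟨(Finset.mem_filter.mp hpS).2.1, hm'⟩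
  calc Rf b n = ∑ m ∈ Finset.Icc (n - 2 * d) (n + 2 * d),
        (S.filter fun p => a p.1 + a p.2 = m).card :=
        Finset.card_eq_sum_card_fiberwise hsum_mem
    _ ≤ (Finset.Icc (n - 2 * d) (n + 2 * d)).card * M := by
        simpa using Finset.sum_le_card_nsmul _ _ _ hfibre
    _ ≤ (4 * d + 1) * M := by
        rw [Nat.card_Icc]
        exact Nat.mul_le_mul_right _ (by omega)

theorem stmt0 (a b : ℕ → ℕ) (ha : StrictMono a) (hb : StrictMono b) (x : ℕ) :
    sf b x ≤ sf a (x + 2 * df a b x) * (4 * df a b x + 1) := by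
  refine Finset.sup_le fun n hn => ?_
  have hnx : n ≤ x := Nat.lt_succ_iff.mp (Finset.mem_range.mp hn)
  rw [Nat.mul_comm]
  exact Rf_le_of_dist_le ha (fun i hi => dist_le_df hb (hi.trans hnx))
    (fun m hm => Rf_le_sf a (by omega))
end

section
/- For all positive integers a, b, d with a/(4d+1) ≤ b ≤ (4d+1)·a, there exist sets A, B ⊆ ℕ such that s_A = a, s_B = b, and d_{A,B} = d. -/
open Filter

/-!
Let `y` consist of the powers `4 ^ t` (`t < b`), their reflections `4 ^ (b + 1) - 4 ^ t`, and a
lacunary tail. The only coincidences among the pair sums of `y` are those of the `b` mirror pairs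
`(i, 2b - 1 - i)`, which all sum to `4 ^ (b + 1)`. The sequence `C * y + e` with offsets
`e t ≤ 2d < C = 4d + 1` has the same coincidences, except that mirror pair `i` now only collides
with the mirror pairs having the same offset sum `e i + e (2b - 1 - i)`.
For `B` all offsets are `d`, so the `b` mirror pairs give `s_B = b`; for `A` the offset sum of
pair `i` is `⌊i / a⌋`, so at most `a` pairs share a sum and `s_A = a`. The hypothesis
`b ≤ (4d + 1) a` is exactly `⌊i / a⌋ ≤ 4d` for `i < b`, which lets each offset of `A` stay within
`d` of `B`'s; at `t = 2b` they differ by exactly `d`.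
-/

open Function

namespace MirrorConstruction

theorem add_eq_add_of_dominated {f : ℕ → ℕ} {n : ℕ} (hf : Injective f)
    (hdom : ∀ i j k, i ≤ j → j < k → n ≤ k → f i + f j < f k)
    {i j i' j' : ℕ} (hij : i ≤ j) (hij' : i' ≤ j') (hn : n ≤ j ∨ n ≤ j')
    (h : f i + f j = f i' + f j') : i = i' ∧ j = j' := by
  rcases lt_trichotomy j j' with hlt | rfl | hlt
  · have := hdom i j j' hij hlt (by omega)
    omega
  · exact ⟨hf (by omega), rfl⟩
  · have := hdom i' j' j hij' hlt (by omega)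
    omega

theorem pow_four_add_pow_four_eq {i j k l : ℕ} (h : 4 ^ i + 4 ^ j = 4 ^ k + 4 ^ l) :
    (i = k ∧ j = l) ∨ (i = l ∧ j = k) := by
  have hdom : ∀ i j k : ℕ, i ≤ j → j < k → 0 ≤ k → 4 ^ i + 4 ^ j < 4 ^ k := by
    intro i j k hij hjk _
    have h1 : 4 ^ i ≤ 4 ^ j := Nat.pow_le_pow_right (by norm_num) hij
    have h2 : 4 ^ (j + 1) ≤ 4 ^ k := Nat.pow_le_pow_right (by norm_num) hjk
    rw [pow_succ] at h2
    have : 0 < 4 ^ j := by positivity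
    omega
  have key : ∀ {i j i' j' : ℕ}, i ≤ j → i' ≤ j' → 4 ^ i + 4 ^ j = 4 ^ i' + 4 ^ j' →
      i = i' ∧ j = j' := fun hij hij' =>
    add_eq_add_of_dominated (f := (4 ^ ·)) (Nat.pow_right_injective (by norm_num)) hdom hij hij'
      (.inl (Nat.zero_le _))
  rcases le_total i j with hij | hji <;> rcases le_total k l with hkl | hlk
  · exact .inl (key hij hkl h)
  · have := key hij hlk (by omega)
    omega
  · have := key hji hkl (by omega)
    omega
  · have := key hji hlk (by omega)
    omega

def mirrorSeq (b t : ℕ) : ℕ :=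
  if t < b then 4 ^ t else if t < 2 * b then 4 ^ (b + 1) - 4 ^ (2 * b - 1 - t) else 4 ^ (t + 2)

section mirrorSeq

variable {b : ℕ}

theorem four_mul_pow_four_le {k : ℕ} (hk : k < b) : 4 * 4 ^ k ≤ 4 ^ b := by
  rw [← pow_succ']
  exact Nat.pow_le_pow_right (by norm_num) hk

theorem mirrorSeq_of_lt {t : ℕ} (ht : t < b) : mirrorSeq b t = 4 ^ t := by
  simp [mirrorSeq, ht]

theorem mirrorSeq_add_pow_four {t : ℕ} (ht₁ : b ≤ t) (ht₂ : t < 2 * b) :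
    mirrorSeq b t + 4 ^ (2 * b - 1 - t) = 4 * 4 ^ b := by
  have hle : 4 ^ (2 * b - 1 - t) ≤ 4 ^ (b + 1) := Nat.pow_le_pow_right (by norm_num) (by omega)
  simp only [mirrorSeq, if_neg (show ¬t < b by omega), if_pos ht₂]
  rw [pow_succ] at hle ⊢
  omega

theorem mirrorSeq_of_le {t : ℕ} (ht : 2 * b ≤ t) : mirrorSeq b t = 4 ^ (t + 2) := by
  simp [mirrorSeq, show ¬t < b by omega, show ¬t < 2 * b by omega]

theorem mirrorSeq_le (t : ℕ) : mirrorSeq b t ≤ 4 ^ (t + 2) := by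
  rcases lt_or_ge t b with h₁ | h₁
  · rw [mirrorSeq_of_lt h₁]
    exact Nat.pow_le_pow_right (by norm_num) (by omega)
  rcases lt_or_ge t (2 * b) with h₂ | h₂
  · have := mirrorSeq_add_pow_four h₁ h₂
    have : 0 < 4 ^ (2 * b - 1 - t) := by positivity
    have : 4 * 4 ^ b ≤ 4 ^ (t + 2) := by
      rw [← pow_succ']
      exact Nat.pow_le_pow_right (by norm_num) (by omega)
    omega
  · exact (mirrorSeq_of_le h₂).le

theorem strictMono_mirrorSeq : StrictMono (mirrorSeq b) := by
  refine strictMono_nat_of_lt_succ fun t => ?_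
  rcases lt_or_ge (t + 1) b with h₁ | h₁
  · rw [mirrorSeq_of_lt h₁, mirrorSeq_of_lt (by omega : t < b), pow_succ]
    have : 0 < 4 ^ t := by positivity
    omega
  rcases lt_or_ge (t + 1) (2 * b) with h₂ | h₂
  · have hsucc := mirrorSeq_add_pow_four h₁ h₂
    rcases lt_or_ge t b with h₃ | h₃
    · rw [mirrorSeq_of_lt h₃]
      have := four_mul_pow_four_le h₃
      have : 0 < 4 ^ t := by positivity
      rw [show 2 * b - 1 - (t + 1) = t by omega] at hsucc
      omega
    · have h := mirrorSeq_add_pow_four h₃ (by omega)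
      rw [show 2 * b - 1 - t = 2 * b - 1 - (t + 1) + 1 by omega, pow_succ] at h
      have : 0 < 4 ^ (2 * b - 1 - (t + 1)) := by positivity
      omega
  · rw [mirrorSeq_of_le h₂]
    have := mirrorSeq_le (b := b) t
    have : 4 ^ (t + 2) < 4 ^ (t + 1 + 2) := Nat.pow_lt_pow_right (by norm_num) (by omega)
    omega

theorem mirrorSeq_add_mirrorSeq_lt {i j k : ℕ} (hij : i ≤ j) (hjk : j < k) (hk : 2 * b ≤ k) :
    mirrorSeq b i + mirrorSeq b j < mirrorSeq b k := by
  have hi : mirrorSeq b i ≤ 4 ^ (j + 2) :=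
    (mirrorSeq_le i).trans (Nat.pow_le_pow_right (by norm_num) (by omega))
  have hk' : 4 * 4 ^ (j + 2) ≤ mirrorSeq b k := by
    rw [mirrorSeq_of_le hk, ← pow_succ']
    exact Nat.pow_le_pow_right (by norm_num) (by omega)
  have := mirrorSeq_le (b := b) j
  have : 0 < 4 ^ (j + 2) := by positivity
  omega

theorem mirrorSeq_shape {t : ℕ} (ht : t < 2 * b) :
    (t < b ∧ mirrorSeq b t = 4 ^ t ∧ 4 * 4 ^ t ≤ 4 ^ b) ∨
      (b ≤ t ∧ mirrorSeq b t + 4 ^ (2 * b - 1 - t) = 4 * 4 ^ b ∧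
        4 * 4 ^ (2 * b - 1 - t) ≤ 4 ^ b) := by
  rcases lt_or_ge t b with h | h
  · exact .inl ⟨h, mirrorSeq_of_lt h, four_mul_pow_four_le h⟩
  · exact .inr ⟨h, mirrorSeq_add_pow_four h ht, four_mul_pow_four_le (by omega)⟩

theorem mirrorSeq_add_eq {i j i' j' : ℕ} (hij : i ≤ j) (hij' : i' ≤ j')
    (h : mirrorSeq b i + mirrorSeq b j = mirrorSeq b i' + mirrorSeq b j') :
    (i = i' ∧ j = j') ∨ (i + j + 1 = 2 * b ∧ i' + j' + 1 = 2 * b) := by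
  by_cases hn : 2 * b ≤ j ∨ 2 * b ≤ j'
  · exact .inl <| add_eq_add_of_dominated strictMono_mirrorSeq.injective
      (fun _ _ _ => mirrorSeq_add_mirrorSeq_lt) hij hij' hn h
  have hpos : 0 < 4 ^ b := by positivity
  rcases mirrorSeq_shape (b := b) (t := i) (by omega) with
    ⟨hi, hyi, hi4⟩ | ⟨hi, hyi, hi4⟩ <;>
  rcases mirrorSeq_shape (b := b) (t := j) (by omega) with
    ⟨hj, hyj, hj4⟩ | ⟨hj, hyj, hj4⟩ <;>
  rcases mirrorSeq_shape (b := b) (t := i') (by omega) with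
    ⟨hi', hyi', hi4'⟩ | ⟨hi', hyi', hi4'⟩ <;>
  rcases mirrorSeq_shape (b := b) (t := j') (by omega) with
    ⟨hj', hyj', hj4'⟩ | ⟨hj', hyj', hj4'⟩
  -- all combinations but three contradict `i ≤ j`, `i' ≤ j'` or the sizes of the terms
  all_goals try (exfalso; omega)
  · have := pow_four_add_pow_four_eq (i := i) (j := j) (k := i') (l := j') (by omega)
    omega
  · have := pow_four_add_pow_four_eq (i := i) (j := 2 * b - 1 - j') (k := i')
      (l := 2 * b - 1 - j) (by omega)
    omega
  · have := pow_four_add_pow_four_eq (i := 2 * b - 1 - i) (j := 2 * b - 1 - j)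
      (k := 2 * b - 1 - i') (l := 2 * b - 1 - j') (by omega)
    omega

end mirrorSeq

theorem eq_and_eq_of_mul_add_eq {C Y Y' E E' : ℕ} (hE : E < C) (hE' : E' < C)
    (h : C * Y + E = C * Y' + E') : Y = Y' ∧ E = E' := by
  have hC : 0 < C := by omega
  have hdiv := congrArg (· / C) h
  have hmod := congrArg (· % C) h
  simp only [Nat.mul_add_div hC, Nat.div_eq_of_lt hE, Nat.div_eq_of_lt hE', Nat.mul_add_mod,
    Nat.mod_eq_of_lt hE, Nat.mod_eq_of_lt hE', add_zero] at hdiv hmod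
  exact ⟨hdiv, hmod⟩

def perturb (C : ℕ) (y e : ℕ → ℕ) (t : ℕ) : ℕ := C * y t + e t

section perturb

variable {C : ℕ} {y e : ℕ → ℕ}

theorem strictMono_perturb (hy : StrictMono y) (he : ∀ t, e t < C) :
    StrictMono (perturb C y e) := by
  intro s t hst
  have : C * y s + C ≤ C * y t :=
    (mul_add_one C (y s)).symm.trans_le (Nat.mul_le_mul_left C (hy hst))
  have := he s
  simp only [perturb]
  omega

theorem perturb_add_eq_iff (he : ∀ t, 2 * e t < C) {i j i' j' : ℕ} :
    perturb C y e i + perturb C y e j = perturb C y e i' + perturb C y e j' ↔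
      y i + y j = y i' + y j' ∧ e i + e j = e i' + e j' := by
  have hsum : ∀ i j, perturb C y e i + perturb C y e j = C * (y i + y j) + (e i + e j) :=
    fun i j => by simp only [perturb]; ring
  rw [hsum, hsum]
  refine ⟨eq_and_eq_of_mul_add_eq ?_ ?_, fun ⟨hy, he⟩ => by rw [hy, he]⟩
  · have := he i; have := he j; omega
  · have := he i'; have := he j'; omega

end perturb

section mirror

variable {C b m s : ℕ} {e : ℕ → ℕ}

theorem perturb_mirrorSeq_add_eq (he : ∀ t, 2 * e t < C) {i j i' j' : ℕ} (hij : i ≤ j)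
    (hij' : i' ≤ j')
    (h : perturb C (mirrorSeq b) e i + perturb C (mirrorSeq b) e j =
      perturb C (mirrorSeq b) e i' + perturb C (mirrorSeq b) e j') :
    (i = i' ∧ j = j') ∨
      (i + j + 1 = 2 * b ∧ i' + j' + 1 = 2 * b ∧ e i + e j = e i' + e j') := by
  obtain ⟨hy, he⟩ := (perturb_add_eq_iff he).1 h
  exact (mirrorSeq_add_eq hij hij' hy).imp_right fun h => ⟨h.1, h.2, he⟩

theorem perturb_mirrorSeq_add_reflect
    (hmir : ∀ i < b, e i + e (2 * b - 1 - i) = s + i / m) {i : ℕ} (hi : i < b) :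
    perturb C (mirrorSeq b) e i + perturb C (mirrorSeq b) e (2 * b - 1 - i) =
      C * (4 * 4 ^ b) + s + i / m := by
  have hy := mirrorSeq_add_pow_four (b := b) (t := 2 * b - 1 - i) (by omega) (by omega)
  rw [show 2 * b - 1 - (2 * b - 1 - i) = i by omega, ← mirrorSeq_of_lt hi] at hy
  simp only [perturb]
  rw [← hy]
  linarith [hmir i hi]

theorem Rf_perturb_mirrorSeq_le (he : ∀ t, 2 * e t < C)
    (hmir : ∀ i < b, e i + e (2 * b - 1 - i) = s + i / m) (hm : 0 < m) (n : ℕ) :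
    Rf (perturb C (mirrorSeq b) e) n ≤ m := by
  refine (Finset.card_le_card_of_injOn (fun p => p.1 % m) (t := Finset.range m)
    (fun p _ => Finset.mem_range.2 (Nat.mod_lt _ hm)) ?_).trans (Finset.card_range m).le
  rintro ⟨i, j⟩ hp ⟨i', j'⟩ hp' hmod
  simp only [Finset.coe_filter, Set.mem_ofPred_eq] at hp hp' hmod
  rcases perturb_mirrorSeq_add_eq he hp.2.1 hp'.2.1 (hp.2.2.trans hp'.2.2.symm) with
    ⟨rfl, rfl⟩ | ⟨hs, hs', hsum⟩
  · rfl
  -- both pairs are mirror pairs, so `i / m` and `i % m` determine `i`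
  rw [show j = 2 * b - 1 - i by omega, show j' = 2 * b - 1 - i' by omega,
    hmir i (by omega), hmir i' (by omega)] at hsum
  have hdiv : i / m = i' / m := by omega
  have hi : i = i' := by rw [← Nat.div_add_mod i m, ← Nat.div_add_mod i' m, hdiv, hmod]
  ext <;> simp only <;> omega

theorem Rf_perturb_mirrorSeq_eq (he : ∀ t, 2 * e t < C)
    (hmir : ∀ i < b, e i + e (2 * b - 1 - i) = s + i / m) (hm : 0 < m) (hmb : m ≤ b) :
    Rf (perturb C (mirrorSeq b) e) (C * (4 * 4 ^ b) + s) = m := by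
  have hmono := strictMono_perturb (strictMono_mirrorSeq (b := b)) fun t =>
    (Nat.le_mul_of_pos_left _ two_pos).trans_lt (he t)
  refine (congrArg Finset.card ?_).trans ((Finset.card_image_of_injective (Finset.range m)
    (f := fun i => (i, 2 * b - 1 - i)) fun _ _ h => congrArg Prod.fst h).trans
      (Finset.card_range m))
  ext ⟨i, j⟩
  simp only [Finset.mem_filter, Finset.mem_product, Finset.mem_range, Finset.mem_image,
    Prod.mk.injEq]
  constructor
  · rintro ⟨-, hij, hsum⟩
    have h0 := perturb_mirrorSeq_add_reflect (C := C) hmir (i := 0) (by omega)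
    rw [Nat.zero_div, add_zero, ← hsum] at h0
    rcases perturb_mirrorSeq_add_eq he hij (by omega) h0.symm with
      ⟨rfl, rfl⟩ | ⟨hs, -, hsum'⟩
    · exact ⟨0, hm, rfl, rfl⟩
    rw [show j = 2 * b - 1 - i by omega, hmir i (by omega), hmir 0 (by omega),
      Nat.zero_div] at hsum'
    exact ⟨i, (Nat.div_eq_zero_iff.1 (by omega)).resolve_left hm.ne', rfl, by omega⟩
  · rintro ⟨i, hi, rfl, rfl⟩
    have hsum := perturb_mirrorSeq_add_reflect (C := C) hmir (i := i) (by omega)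
    rw [Nat.div_eq_zero_iff.2 (.inr hi), add_zero] at hsum
    have := hmono.le_apply (x := i)
    have := hmono.le_apply (x := 2 * b - 1 - i)
    omega

end mirror

theorem sf_eventually_eq {A : ℕ → ℕ} {m n₀ : ℕ} (hle : ∀ n, Rf A n ≤ m)
    (heq : Rf A n₀ = m) :
    ∀ᶠ x in atTop, sf A x = m :=
  eventually_atTop.2 ⟨n₀, fun _ hx => le_antisymm (Finset.sup_le fun n _ => hle n)
    (heq ▸ Finset.le_sup (Finset.mem_range.2 (by omega)))⟩

theorem df_eventually_eq {A B : ℕ → ℕ} {d t₀ : ℕ} (hA : StrictMono A)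
    (hle : ∀ t, Nat.dist (A t) (B t) ≤ d) (heq : Nat.dist (A t₀) (B t₀) = d) :
    ∀ᶠ x in atTop, df A B x = d := by
  refine eventually_atTop.2 ⟨A t₀, fun x hx => le_antisymm ?_ ?_⟩
  · refine Finset.sup_le fun t _ => ?_
    split_ifs
    exacts [hle t, Nat.zero_le d]
  · have ht₀ : t₀ ≤ x := (hA.id_le t₀).trans hx
    have := Finset.le_sup (f := fun t => if A t ≤ x ∨ B t ≤ x then Nat.dist (A t) (B t) else 0)
      (Finset.mem_range.2 (Nat.lt_succ_of_le ht₀))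
    simp only [hx, true_or, if_true, heq] at this
    exact this

theorem df_comm (A B : ℕ → ℕ) (x : ℕ) : df A B x = df B A x := by
  refine Finset.sup_congr rfl fun t _ => ?_
  simp only [or_comm, Nat.dist_comm]

def flatOffset (b d t : ℕ) : ℕ := if t ≤ 2 * b then d else 0

/-- The excess `i / a ≤ 4 * d` of the mirror pair `(i, 2 * b - 1 - i)` is split into two parts
of size at most `2 * d`, so that each stays within `d` of `flatOffset`. -/
def splitOffset (a b d t : ℕ) : ℕ :=
  if t < b then min (t / a) (2 * d)
  else if t < 2 * b then (2 * b - 1 - t) / a - min ((2 * b - 1 - t) / a) (2 * d)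
  else 0

section offsets

variable {a b d : ℕ}

theorem flatOffset_add_reflect {i : ℕ} (hi : i < b) :
    flatOffset b d i + flatOffset b d (2 * b - 1 - i) = 2 * d + i / b := by
  simp only [flatOffset, if_pos (show i ≤ 2 * b by omega),
    if_pos (show 2 * b - 1 - i ≤ 2 * b by omega), Nat.div_eq_of_lt hi]
  omega

theorem splitOffset_add_reflect {i : ℕ} (hi : i < b) :
    splitOffset a b d i + splitOffset a b d (2 * b - 1 - i) = i / a := by
  simp only [splitOffset, if_pos hi, if_neg (show ¬2 * b - 1 - i < b by omega),
    if_pos (show 2 * b - 1 - i < 2 * b by omega), show 2 * b - 1 - (2 * b - 1 - i) = i by omega]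
  omega

theorem splitOffset_le (hba : b ≤ (4 * d + 1) * a) (t : ℕ) : splitOffset a b d t ≤ 2 * d := by
  unfold splitOffset
  split_ifs with h₁ h₂
  · exact min_le_right _ _
  · have : (2 * b - 1 - t) / a < 4 * d + 1 := Nat.div_lt_of_lt_mul
      (lt_of_lt_of_le (by omega) (hba.trans_eq (mul_comm _ _)))
    omega
  · exact Nat.zero_le _

theorem dist_splitOffset_flatOffset_le (hba : b ≤ (4 * d + 1) * a) (t : ℕ) :
    Nat.dist (splitOffset a b d t) (flatOffset b d t) ≤ d := by
  have := splitOffset_le hba t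
  unfold flatOffset
  split_ifs
  · simp only [Nat.dist]; omega
  · simp [splitOffset, show ¬t < b by omega, show ¬t < 2 * b by omega, Nat.dist]

theorem dist_splitOffset_flatOffset_two_mul :
    Nat.dist (splitOffset a b d (2 * b)) (flatOffset b d (2 * b)) = d := by
  simp [splitOffset, flatOffset, Nat.dist, show ¬2 * b < b by omega]

end offsets

theorem exists_of_le {a b d : ℕ} (ha : 0 < a) (hab : a ≤ b) (hba : b ≤ (4 * d + 1) * a) :
    ∃ A B : ℕ → ℕ, StrictMono A ∧ StrictMono B ∧
      (∀ᶠ x in atTop, sf A x = a) ∧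
      (∀ᶠ x in atTop, sf B x = b) ∧
      (∀ᶠ x in atTop, df A B x = d) := by
  have hA : ∀ t, 2 * splitOffset a b d t < 4 * d + 1 := fun t => by
    have := splitOffset_le hba t
    omega
  have hB : ∀ t, 2 * flatOffset b d t < 4 * d + 1 := fun t => by
    unfold flatOffset
    split_ifs <;> omega
  have hmirA : ∀ i < b, splitOffset a b d i + splitOffset a b d (2 * b - 1 - i) = 0 + i / a :=
    fun _ hi => (splitOffset_add_reflect hi).trans (zero_add _).symm
  have hmonoA := strictMono_perturb (strictMono_mirrorSeq (b := b)) fun t =>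
    (Nat.le_mul_of_pos_left _ two_pos).trans_lt (hA t)
  have hmonoB := strictMono_perturb (strictMono_mirrorSeq (b := b)) fun t =>
    (Nat.le_mul_of_pos_left _ two_pos).trans_lt (hB t)
  refine ⟨_, _, hmonoA, hmonoB,
    sf_eventually_eq (Rf_perturb_mirrorSeq_le hA hmirA ha)
      (Rf_perturb_mirrorSeq_eq hA hmirA ha hab),
    sf_eventually_eq (Rf_perturb_mirrorSeq_le hB (fun _ => flatOffset_add_reflect) (by omega))
      (Rf_perturb_mirrorSeq_eq hB (fun _ => flatOffset_add_reflect) (by omega) le_rfl),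
    df_eventually_eq hmonoA (fun t => ?_) (t₀ := 2 * b) ?_⟩
  · simpa only [perturb, Nat.dist_add_add_left] using dist_splitOffset_flatOffset_le hba t
  · simpa only [perturb, Nat.dist_add_add_left] using dist_splitOffset_flatOffset_two_mul

end MirrorConstruction

theorem stmt3_general (a b d : ℕ) (ha : 0 < a)
    (h1 : a ≤ (4 * d + 1) * b) (h2 : b ≤ (4 * d + 1) * a) :
    ∃ A B : ℕ → ℕ, StrictMono A ∧ StrictMono B ∧
      (∀ᶠ x in atTop, sf A x = a) ∧
      (∀ᶠ x in atTop, sf B x = b) ∧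
      (∀ᶠ x in atTop, df A B x = d) := by
  rcases le_total a b with hab | hba
  · exact MirrorConstruction.exists_of_le ha hab h2
  · have hb : 0 < b := Nat.pos_of_ne_zero fun hb => by simp [hb] at h1; omega
    obtain ⟨A, B, hA, hB, hsA, hsB, hd⟩ := MirrorConstruction.exists_of_le hb hba h1
    exact ⟨B, A, hB, hA, hsB, hsA,
      hd.mono fun x hx => (MirrorConstruction.df_comm B A x).trans hx⟩

theorem stmt3 (a b d : ℕ) (ha : 0 < a) (hb : 0 < b) (hd : 0 < d)
    (h1 : a ≤ (4 * d + 1) * b) (h2 : b ≤ (4 * d + 1) * a) :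
    ∃ A B : ℕ → ℕ, StrictMono A ∧ StrictMono B ∧
      (∀ᶠ x in atTop, sf A x = a) ∧
      (∀ᶠ x in atTop, sf B x = b) ∧
      (∀ᶠ x in atTop, df A B x = d) :=
  stmt3_general a b d ha h1 h2
end

section
/- Let ε > 0 and let A = {a_1 < a_2 < ...} ⊆ ℕ satisfy |a_n − n²| = O(exp((log 2 − ε)·(log n)/(log log n))). Then the representation function R_A(n) is unbounded, i.e., limsup_{n→∞} R_A(n) = ∞. -/
/-!
Let `n` be the product of a set `P` of `k` primes `≡ 1 (mod 4)`. Choosing a Gaussian prime `ϖ_p`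
above each `p ∈ P`, the products `∏_{p ∈ S} ϖ_p ∏_{p ∉ S} conj ϖ_p` (`S ⊆ P`) are pairwise
non-associate up to conjugation, so `n` has at least `2^(k-1)` representations `n = x² + y²` with
`1 ≤ x ≤ y`. Each gives `a_x + a_y = n + O(E)`, where `E` bounds `|a_t - t²|` for `t ≤ n`, so by
pigeonhole some integer has at least `2^(k-1) / (4E + 3)` representations `a_i + a_j`.

Take for `P` the first `k` primes `≡ 1 (mod 4)`. As `∑ log p / p` diverges over these primes, for
infinitely many `k` they all lie below `k^(1+c)`; then `log n / log log n ≤ (1 + c) k`, hence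
`E ≪ exp((log 2 - ε)(1 + c) k) = o(2^k)` once `c` is small.
-/

open Filter

local notation "ℤ[i]" => GaussianInt

namespace GaussianInt

theorem prime_of_norm_eq_prime {z : ℤ[i]} {p : ℕ} (hp : p.Prime) (hz : z.norm = p) :
    Prime z := by
  rw [← irreducible_iff_prime]
  refine ⟨fun hu => hp.one_lt.ne' ?_, fun x y hxy => ?_⟩
  · exact_mod_cast hz ▸ (Zsqrtd.norm_eq_one_iff' (by norm_num) z).mpr hu
  · have hirr : Irreducible (x.norm * y.norm) := by
      rw [← Zsqrtd.norm_mul, ← hxy, hz]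
      exact (Nat.prime_iff_prime_int.mp hp).irreducible
    simpa only [Zsqrtd.isUnit_iff_norm_isUnit] using hirr.isUnit_or_isUnit rfl

theorem eq_of_dvd_of_norm_eq_prime {x y : ℤ[i]} {p q : ℕ} (hp : p.Prime) (hq : q.Prime)
    (hx : x.norm = p) (hy : y.norm = q) (h : x ∣ y) : p = q := by
  have h : x.norm ∣ y.norm := map_dvd Zsqrtd.normMonoidHom h
  rw [hx, hy, Int.natCast_dvd_natCast] at h
  exact (Nat.prime_dvd_prime_iff_eq hp hq).mp h

theorem not_dvd_star_of_norm_eq_prime {z : ℤ[i]} {p : ℕ} (hp : p.Prime) (hp2 : p ≠ 2)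
    (hz : z.norm = p) : ¬ z ∣ star z := by
  rintro ⟨⟨a, b⟩, hu⟩
  have hzp : z.re * z.re + z.im * z.im = p := by rw [← hz, Zsqrtd.norm_def]; ring
  have hab : a * a + b * b = 1 := by
    have h := congrArg Zsqrtd.norm hu
    rw [Zsqrtd.norm_conj, Zsqrtd.norm_mul, hz, Zsqrtd.norm_def] at h
    have hp0 : (p : ℤ) ≠ 0 := by exact_mod_cast hp.ne_zero
    linear_combination (mul_left_cancel₀ hp0 (h.symm.trans (mul_one _).symm))
  have hre := congrArg Zsqrtd.re hu
  have him := congrArg Zsqrtd.im hu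
  simp only [Zsqrtd.re_star, Zsqrtd.im_star, Zsqrtd.re_mul, Zsqrtd.im_mul] at hre him
  have hsq : ∀ r : ℤ, (p : ℤ) ≠ r * r := fun r h => by
    have h : p = r.natAbs * r.natAbs := by zify; simpa [abs_mul_abs_self] using h
    rcases Nat.prime_mul_iff.mp (h ▸ hp) with ⟨hr, hr1⟩ | ⟨hr, hr1⟩ <;>
      exact Nat.not_prime_one (hr1 ▸ hr)
  have htwo : ∀ r : ℤ, (p : ℤ) ≠ 2 * (r * r) := fun r h => by
    have h : p = 2 * (r.natAbs * r.natAbs) := by zify; simpa [abs_mul_abs_self] using h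
    rcases Nat.prime_mul_iff.mp (h ▸ hp) with ⟨-, hr1⟩ | ⟨-, h21⟩
    · exact hp2 (by rw [h, hr1])
    · omega
  have ha : -1 ≤ a ∧ a ≤ 1 := by constructor <;> nlinarith
  have hb : -1 ≤ b ∧ b ≤ 1 := by constructor <;> nlinarith
  obtain ⟨ha₀, ha₁⟩ := ha
  obtain ⟨hb₀, hb₁⟩ := hb
  interval_cases a <;> interval_cases b <;> norm_num at hab
  · exact hsq z.im (by nlinarith)
  · exact htwo z.re (by rw [← hzp, show z.im = z.re by linarith]; ring)
  · exact htwo z.im (by rw [← hzp, show z.re = -z.im by linarith]; ring)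
  · exact hsq z.re (by nlinarith)

def absCoords (z : ℤ[i]) : ℕ × ℕ :=
  (min z.re.natAbs z.im.natAbs, max z.re.natAbs z.im.natAbs)

theorem absCoords_fst_sq_add_snd_sq (z : ℤ[i]) :
    (absCoords z).1 ^ 2 + (absCoords z).2 ^ 2 = z.norm.natAbs := by
  rw [natAbs_norm_eq, absCoords]
  rcases le_total z.re.natAbs z.im.natAbs with h | h
  · rw [min_eq_left h, max_eq_right h]; ring
  · rw [min_eq_right h, max_eq_left h]; ring

theorem exists_isUnit_of_absCoords_eq {z w : ℤ[i]} (h : absCoords z = absCoords w) :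
    ∃ u : ℤ[i], IsUnit u ∧ (z = u * w ∨ z = u * star w) := by
  have hI : IsUnit (⟨0, 1⟩ : ℤ[i]) := (Zsqrtd.norm_eq_one_iff' (by norm_num) _).mp rfl
  have hI' : IsUnit (⟨0, -1⟩ : ℤ[i]) := (Zsqrtd.norm_eq_one_iff' (by norm_num) _).mp rfl
  have habs : (z.re.natAbs = w.re.natAbs ∧ z.im.natAbs = w.im.natAbs) ∨
      (z.re.natAbs = w.im.natAbs ∧ z.im.natAbs = w.re.natAbs) := by
    simp only [absCoords, Prod.mk.injEq] at h
    omega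
  rcases habs with ⟨h₁, h₂⟩ | ⟨h₁, h₂⟩ <;>
    rcases Int.natAbs_eq_natAbs_iff.mp h₁ with h₁ | h₁ <;>
    rcases Int.natAbs_eq_natAbs_iff.mp h₂ with h₂ | h₂ <;>
    first
    | (refine ⟨1, isUnit_one, ?_⟩; simp [Zsqrtd.ext_iff, h₁, h₂]; done)
    | (refine ⟨-1, isUnit_one.neg, ?_⟩; simp [Zsqrtd.ext_iff, h₁, h₂]; done)
    | (refine ⟨_, hI, ?_⟩; simp [Zsqrtd.ext_iff, h₁, h₂]; done)
    | (refine ⟨_, hI', ?_⟩; simp [Zsqrtd.ext_iff, h₁, h₂])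

section conjProd

variable (ϖ : ℕ → ℤ[i]) (P : Finset ℕ)

/-- When `ϖ p` is a Gaussian prime above each `p ∈ P`, these are, up to units, the Gaussian
integers of norm `∏ P`. -/
def conjProd (S : Finset ℕ) : ℤ[i] := (∏ p ∈ S, ϖ p) * ∏ p ∈ P \ S, star (ϖ p)

variable {ϖ P}

theorem norm_conjProd (hϖ : ∀ p ∈ P, (ϖ p).norm = p) {S : Finset ℕ} (hS : S ⊆ P) :
    (conjProd ϖ P S).norm = ∏ p ∈ P, (p : ℤ) := by
  have norm_prod (s : Finset ℕ) (f : ℕ → ℤ[i]) : (∏ p ∈ s, f p).norm = ∏ p ∈ s, (f p).norm :=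
    map_prod Zsqrtd.normMonoidHom f s
  rw [conjProd, Zsqrtd.norm_mul, norm_prod, norm_prod, ← Finset.prod_sdiff hS, mul_comm]
  congr 1 <;> refine Finset.prod_congr rfl fun p hp => ?_
  · rw [Zsqrtd.norm_conj, hϖ p (Finset.mem_sdiff.mp hp).1]
  · exact hϖ p (hS hp)

theorem star_conjProd {S : Finset ℕ} (hS : S ⊆ P) :
    star (conjProd ϖ P S) = conjProd ϖ P (P \ S) := by
  simp only [conjProd, star_mul, star_prod, star_star, Finset.sdiff_sdiff_eq_self hS]

theorem dvd_conjProd_iff (hP : ∀ p ∈ P, p.Prime ∧ p ≠ 2) (hϖ : ∀ p ∈ P, (ϖ p).norm = p)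
    {S : Finset ℕ} (hS : S ⊆ P) {i : ℕ} (hi : i ∈ P) : ϖ i ∣ conjProd ϖ P S ↔ i ∈ S := by
  refine ⟨fun hdvd => ?_, fun hiS => (Finset.dvd_prod_of_mem ϖ hiS).mul_right _⟩
  have hprime := prime_of_norm_eq_prime (hP i hi).1 (hϖ i hi)
  by_contra hiS
  rcases hprime.dvd_or_dvd hdvd with h | h
  · obtain ⟨j, hj, hij⟩ := hprime.exists_mem_finset_dvd h
    have := eq_of_dvd_of_norm_eq_prime (hP i hi).1 (hP j (hS hj)).1 (hϖ i hi) (hϖ j (hS hj)) hij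
    exact hiS (this ▸ hj)
  · obtain ⟨j, hj, hij⟩ := hprime.exists_mem_finset_dvd h
    obtain ⟨hjP, -⟩ := Finset.mem_sdiff.mp hj
    obtain rfl := eq_of_dvd_of_norm_eq_prime (hP i hi).1 (hP j hjP).1 (hϖ i hi)
      ((Zsqrtd.norm_conj _).trans (hϖ j hjP)) hij
    exact not_dvd_star_of_norm_eq_prime (hP i hi).1 (hP i hi).2 (hϖ i hi) hij

theorem eq_of_conjProd_eq_mul (hP : ∀ p ∈ P, p.Prime ∧ p ≠ 2) (hϖ : ∀ p ∈ P, (ϖ p).norm = p)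
    {S T : Finset ℕ} (hS : S ⊆ P) (hT : T ⊆ P) {u : ℤ[i]} (hu : IsUnit u)
    (h : conjProd ϖ P T = u * conjProd ϖ P S) : T = S := by
  ext i
  by_cases hi : i ∈ P
  · rw [← dvd_conjProd_iff hP hϖ hS hi, ← dvd_conjProd_iff hP hϖ hT hi, h, hu.dvd_mul_left]
  · exact iff_of_false (fun h => hi (hT h)) (fun h => hi (hS h))

theorem star_conjProd_ne_mul (hP : ∀ p ∈ P, p.Prime ∧ p ≠ 2) (hϖ : ∀ p ∈ P, (ϖ p).norm = p)
    (hne : P.Nonempty) {S : Finset ℕ} (hS : S ⊆ P) {u : ℤ[i]} (hu : IsUnit u) :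
    star (conjProd ϖ P S) ≠ u * conjProd ϖ P S := by
  rw [star_conjProd hS]
  intro h
  have h := eq_of_conjProd_eq_mul hP hϖ hS Finset.sdiff_subset hu h
  obtain ⟨p, hp⟩ := hne
  by_cases hpS : p ∈ S
  · exact (Finset.mem_sdiff.mp (h ▸ hpS)).2 hpS
  · exact hpS (h ▸ Finset.mem_sdiff.mpr ⟨hp, hpS⟩)

end conjProd

end GaussianInt

open GaussianInt in
theorem exists_finset_sq_add_sq_eq_prod {P : Finset ℕ} (hP : ∀ p ∈ P, p.Prime ∧ p % 4 = 1)
    (hne : P.Nonempty) :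
    ∃ F : Finset (ℕ × ℕ), 2 ^ P.card ≤ 2 * F.card ∧
      ∀ q ∈ F, 1 ≤ q.1 ∧ q.1 ≤ q.2 ∧ q.1 ^ 2 + q.2 ^ 2 = ∏ p ∈ P, p := by
  classical
  have hP' : ∀ p ∈ P, p.Prime ∧ p ≠ 2 := fun p hp => ⟨(hP p hp).1, by have := (hP p hp).2; omega⟩
  have hsplit : ∀ p ∈ P, ∃ z : ℤ[i], z.norm = p := fun p hp => by
    have : Fact p.Prime := ⟨(hP p hp).1⟩
    obtain ⟨x, y, hxy⟩ := Nat.Prime.sq_add_sq (p := p) (by have := (hP p hp).2; omega)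
    exact ⟨⟨x, y⟩, by rw [Zsqrtd.norm_def, ← hxy]; push_cast; ring⟩
  choose! ϖ hϖ using hsplit
  refine ⟨P.powerset.image (absCoords ∘ conjProd ϖ P), ?_, fun q hq => ?_⟩
  · rw [← Finset.card_powerset]
    refine Finset.card_le_mul_card_image _ 2 fun v hv => ?_
    obtain ⟨S, hS, rfl⟩ := Finset.mem_image.mp hv
    rw [Finset.mem_powerset] at hS
    refine (Finset.card_le_card fun T hT => ?_).trans (Finset.card_le_two (a := S) (b := P \ S))
    obtain ⟨hT, hTS⟩ := Finset.mem_filter.mp hT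
    rw [Finset.mem_powerset] at hT
    obtain ⟨u, hu, h | h⟩ := exists_isUnit_of_absCoords_eq hTS
    · simp [eq_of_conjProd_eq_mul hP' hϖ hS hT hu h]
    · rw [star_conjProd hS] at h
      simp [eq_of_conjProd_eq_mul hP' hϖ Finset.sdiff_subset hT hu h]
  · obtain ⟨S, hS, rfl⟩ := Finset.mem_image.mp hq
    rw [Finset.mem_powerset] at hS
    set z := conjProd ϖ P S
    -- a vanishing coordinate would give `star z = ± z`
    have hre : z.re ≠ 0 := fun h0 => star_conjProd_ne_mul hP' hϖ hne hS isUnit_one.neg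
      (by simp [Zsqrtd.ext_iff, z, h0])
    have him : z.im ≠ 0 := fun h0 => star_conjProd_ne_mul hP' hϖ hne hS isUnit_one
      (by simp [Zsqrtd.ext_iff, z, h0])
    refine ⟨?_, min_le_max, ?_⟩
    · exact le_min (Int.natAbs_pos.mpr hre) (Int.natAbs_pos.mpr him)
    · rw [Function.comp_apply, absCoords_fst_sq_add_snd_sq, norm_conjProd hϖ hS,
        ← Nat.cast_prod, Int.natAbs_natCast]

open Real

theorem summable_log_div_nth {p : ℕ → Prop} {c : ℝ} (hc : 0 < c)
    (h : ∀ᶠ K : ℕ in atTop, ((K : ℝ) + 1) ^ (1 + c) ≤ Nat.nth p K) :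
    Summable fun K => log (Nat.nth p K) / Nat.nth p K := by
  set B := 2 * (1 + c) / c
  have hsum : Summable fun K : ℕ => B * (1 / |(K : ℝ) + 1| ^ (1 + c / 2)) :=
    ((summable_one_div_nat_add_rpow 1 _).mpr (by linarith)).mul_left B
  refine hsum.of_norm_bounded_eventually_nat ?_
  filter_upwards [h, eventually_ge_atTop 2] with K hK hK2
  set x : ℝ := (Nat.nth p K : ℝ)
  set y := ((K : ℝ) + 1) ^ (1 + c)
  have hK1 : (3 : ℝ) ≤ K + 1 := by norm_cast; omega
  have hy : exp 1 ≤ y := calc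
    exp 1 ≤ 3 := exp_one_lt_d9.le.trans (by norm_num)
    _ ≤ K + 1 := hK1
    _ ≤ y := self_le_rpow_of_one_le (by linarith) (by linarith)
  have hx : 1 < x := by linarith [add_one_le_exp 1]
  rw [Real.norm_of_nonneg (div_nonneg (log_nonneg hx.le) (by linarith)),
    abs_of_pos (by linarith)]
  calc log x / x ≤ log y / y := log_div_self_antitoneOn hy (hy.trans hK) hK
    _ = (1 + c) * log ((K : ℝ) + 1) / y := by rw [log_rpow (by linarith)]
    _ ≤ (1 + c) * (((K : ℝ) + 1) ^ (c / 2) / (c / 2)) / y := by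
        gcongr; exact log_le_rpow_div (by linarith) (by linarith)
    _ = B * (1 / ((K : ℝ) + 1) ^ (1 + c / 2)) := by
        have hy_split : y = ((K : ℝ) + 1) ^ (1 + c / 2) * ((K : ℝ) + 1) ^ (c / 2) := by
          simp only [y]; rw [← rpow_add (by linarith)]; ring_nf
        rw [hy_split, show B = 2 * (1 + c) / c from rfl]
        field_simp

theorem frequently_nth_lt_rpow {p : ℕ → Prop} (hp : {n | p n}.Infinite)
    (hdiv : ¬ Summable ({n | p n}.indicator fun n : ℕ => log n / n)) {c : ℝ} (hc : 0 < c) :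
    ∃ᶠ K in atTop, (Nat.nth p K : ℝ) < ((K : ℝ) + 1) ^ (1 + c) := by
  refine fun hev => hdiv ?_
  have hsum := summable_log_div_nth hc (hev.mono fun K hK => not_lt.mp hK)
  rw [← (Nat.nth_injective hp).summable_iff]
  · simpa [Function.comp_def, Nat.nth_mem_of_infinite hp] using hsum
  · intro n hn
    rw [Nat.range_nth_of_infinite hp] at hn
    exact Set.indicator_of_notMem hn _

open ArithmeticFunction vonMangoldt in
theorem frequently_nth_prime_one_mod_four_lt_rpow {c : ℝ} (hc : 0 < c) :
    ∃ᶠ K in atTop,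
      (Nat.nth (fun p => p.Prime ∧ (p : ZMod 4) = 1) K : ℝ) < ((K : ℝ) + 1) ^ (1 + c) := by
  refine frequently_nth_lt_rpow (Nat.infinite_setOfPred_prime_and_eq_mod isUnit_one) ?_ hc
  convert not_summable_residueClass_prime_div (q := 4) (a := 1) isUnit_one using 2
  funext n
  by_cases hn : n.Prime
  · by_cases hn4 : (n : ZMod 4) = 1
    · simp [hn, hn4, vonMangoldt_apply_prime hn]
    · simp [hn, hn4]
  · simp [hn]

theorem monotoneOn_log_div_log_log :
    MonotoneOn (fun x => log x / log (log x)) (Set.Ici (exp (exp 1))) := by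
  intro x hx y hy hxy
  have hlog {z : ℝ} (hz : z ∈ Set.Ici (exp (exp 1))) : exp 1 ≤ log z :=
    (le_log_iff_exp_le ((exp_pos _).trans_le hz)).mpr hz
  have hpos {z : ℝ} (hz : z ∈ Set.Ici (exp (exp 1))) : 0 < log z := (exp_pos 1).trans_le (hlog hz)
  have hloglog {z : ℝ} (hz : z ∈ Set.Ici (exp (exp 1))) : 0 < log (log z) :=
    log_pos ((one_lt_exp_iff.mpr one_pos).trans_le (hlog hz))
  have h := log_div_self_antitoneOn (hlog hx) (hlog hy)
    (log_le_log ((exp_pos _).trans_le hx) hxy)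
  simp only at h ⊢
  rw [div_le_div_iff₀ (hpos hy) (hpos hx)] at h
  rw [div_le_div_iff₀ (hloglog hx) (hloglog hy)]
  linarith

theorem exp_exp_one_le_sixteen : exp (exp 1) ≤ 16 := by
  rw [← le_log_iff_exp_le (by norm_num), show (16 : ℝ) = 2 ^ 4 by norm_num, log_pow]
  push_cast
  linarith [exp_one_lt_d9, log_two_gt_d9]

theorem exists_forall_abs_le_add_mul_exp {φ : ℕ → ℝ} {δ C : ℝ}
    (h : ∀ᶠ t : ℕ in atTop, |φ t| ≤ C * exp (δ * log t / log (log t))) :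
    0 ≤ C ∧ ∃ D, ∀ n t : ℕ, 16 ≤ n → t ≤ n →
      |φ t| ≤ D + C * exp (max δ 0 * (log n / log (log n))) := by
  obtain ⟨t₀, ht₀⟩ := h.exists
  have hC : 0 ≤ C := nonneg_of_mul_nonneg_left ((abs_nonneg _).trans ht₀) (exp_pos _)
  obtain ⟨T, hT⟩ := eventually_atTop.mp h
  refine ⟨hC, ∑ t ∈ Finset.range (max T 16), |φ t|, fun n t hn htn => ?_⟩
  have hD : 0 ≤ ∑ t ∈ Finset.range (max T 16), |φ t| := Finset.sum_nonneg fun _ _ => abs_nonneg _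
  rcases lt_or_ge t (max T 16) with htT | htT
  · have := Finset.single_le_sum (fun i _ => abs_nonneg (φ i)) (Finset.mem_range.mpr htT)
    have := mul_nonneg hC (exp_pos (max δ 0 * (log n / log (log n)))).le
    linarith
  have hmem {s : ℕ} (hs : 16 ≤ s) : (s : ℝ) ∈ Set.Ici (exp (exp 1)) :=
    exp_exp_one_le_sixteen.trans (by exact_mod_cast hs)
  have ht16 : 16 ≤ t := le_of_max_le_right htT
  have hL : 0 ≤ log t / log (log t) := by
    have ht : (16 : ℝ) ≤ t := by exact_mod_cast ht16
    have hlog : 1 ≤ log t := by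
      rw [le_log_iff_exp_le (by positivity)]; linarith [exp_one_lt_d9]
    exact div_nonneg (by linarith) (log_nonneg hlog)
  have hexp : δ * (log t / log (log t)) ≤ max δ 0 * (log n / log (log n)) := calc
    δ * (log t / log (log t)) ≤ max δ 0 * (log t / log (log t)) :=
      mul_le_mul_of_nonneg_right (le_max_left _ _) hL
    _ ≤ max δ 0 * (log n / log (log n)) := mul_le_mul_of_nonneg_left
      (monotoneOn_log_div_log_log (hmem ht16) (hmem hn) (by exact_mod_cast htn)) (le_max_right _ _)
  calc |φ t| ≤ C * exp (δ * log t / log (log t)) := hT t (le_of_max_le_left htT)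
    _ ≤ C * exp (max δ 0 * (log n / log (log n))) := by
      rw [mul_div_assoc]; exact mul_le_mul_of_nonneg_left (exp_le_exp.mpr hexp) hC
    _ ≤ _ := le_add_of_nonneg_left hD

theorem log_div_log_log_prod_le {P : Finset ℕ} {c : ℝ} (hP : 2 ≤ P.card) (h3 : ∀ p ∈ P, 3 ≤ p)
    (hc : 0 ≤ c) (hle : ∀ p ∈ P, (p : ℝ) ≤ (P.card : ℝ) ^ (1 + c)) :
    log (∏ p ∈ P, p : ℕ) / log (log (∏ p ∈ P, p : ℕ)) ≤ (1 + c) * P.card := by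
  set k := P.card
  have hk : (2 : ℝ) ≤ k := by exact_mod_cast hP
  have hp0 : ∀ p ∈ P, (p : ℝ) ≠ 0 := fun p hp => by have := h3 p hp; positivity
  have hlog : log (∏ p ∈ P, p : ℕ) = ∑ p ∈ P, log p := by
    rw [Nat.cast_prod, log_prod hp0]
  have hlower : (k : ℝ) ≤ log (∏ p ∈ P, p : ℕ) := by
    rw [hlog]
    refine le_of_eq_of_le (by simp [k]) (Finset.card_nsmul_le_sum P _ 1 fun p hp => ?_)
    rw [le_log_iff_exp_le (by have := h3 p hp; positivity)]
    have : (3 : ℝ) ≤ p := by exact_mod_cast h3 p hp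
    linarith [exp_one_lt_d9]
  have hupper : log (∏ p ∈ P, p : ℕ) ≤ k * ((1 + c) * log k) := by
    rw [hlog, ← log_rpow (by positivity)]
    refine (Finset.sum_le_card_nsmul P _ _ fun p hp => ?_).trans_eq (nsmul_eq_mul _ _)
    exact log_le_log (by have := h3 p hp; positivity) (hle p hp)
  have hlogk : 0 < log k := log_pos (by linarith)
  have hloglog : log k ≤ log (log (∏ p ∈ P, p : ℕ)) := log_le_log (by linarith) hlower
  rw [div_le_iff₀ (hlogk.trans_le hloglog)]
  calc log (∏ p ∈ P, p : ℕ) ≤ k * ((1 + c) * log k) := hupper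
    _ ≤ k * ((1 + c) * log (log (∏ p ∈ P, p : ℕ))) := by gcongr
    _ = (1 + c) * k * log (log (∏ p ∈ P, p : ℕ)) := by ring

theorem eventually_add_mul_exp_le_two_pow {θ : ℝ} (hθ : θ < log 2) (A B : ℝ) :
    ∀ᶠ k : ℕ in atTop, A + B * exp (θ * k) ≤ 2 ^ k := by
  have h₀ : (fun k : ℕ => (1 : ℝ) ^ k) =o[atTop] fun k => (2 : ℝ) ^ k :=
    isLittleO_pow_pow_of_lt_left zero_le_one one_lt_two
  have h₁ : (fun k : ℕ => exp θ ^ k) =o[atTop] fun k => (2 : ℝ) ^ k :=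
    isLittleO_pow_pow_of_lt_left (exp_pos θ).le ((lt_log_iff_exp_lt two_pos).mp hθ)
  filter_upwards [((h₀.const_mul_left A).add (h₁.const_mul_left B)).bound one_pos] with k hk
  rw [one_pow, mul_one, one_mul, Real.norm_eq_abs, Real.norm_eq_abs, abs_pow, abs_two,
    ← exp_nat_mul, mul_comm (k : ℝ)] at hk
  exact (le_abs_self _).trans hk

theorem exists_primes_one_mod_four_add_mul_exp_le_two_pow {δ : ℝ} (hδ₀ : 0 ≤ δ)
    (hδ : δ < log 2) (A : ℝ) {B : ℝ} (hB : 0 ≤ B) :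
    ∃ P : Finset ℕ, (∀ p ∈ P, p.Prime ∧ p % 4 = 1) ∧ 16 ≤ ∏ p ∈ P, p ∧
      A + B * exp (δ * (log (∏ p ∈ P, p : ℕ) / log (log (∏ p ∈ P, p : ℕ)))) ≤ 2 ^ P.card := by
  have hlog2 : 0 < log 2 := log_pos one_lt_two
  set c := (log 2 - δ) / (2 * log 2)
  have hc : 0 < c := div_pos (by linarith) (by linarith)
  have hθ : δ * (1 + c) < log 2 := by
    have : log 2 * c = (log 2 - δ) / 2 := by simp only [c]; field_simp
    nlinarith [mul_le_mul_of_nonneg_right hδ.le hc.le]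
  set q : ℕ → Prop := fun p => p.Prime ∧ (p : ZMod 4) = 1
  have hq : {n | q n}.Infinite := Nat.infinite_setOfPred_prime_and_eq_mod isUnit_one
  obtain ⟨K, hK, hK1, hKexp⟩ := ((frequently_nth_prime_one_mod_four_lt_rpow hc).and_eventually
    ((eventually_ge_atTop 1).and
      ((tendsto_add_atTop_nat 1).eventually (eventually_add_mul_exp_le_two_pow hθ A B)))).exists
  set P := (Finset.range (K + 1)).image (Nat.nth q)
  have hcard : P.card = K + 1 := by
    rw [Finset.card_image_of_injective _ (Nat.nth_injective hq), Finset.card_range]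
  have hP : ∀ p ∈ P, p.Prime ∧ p % 4 = 1 ∧ (p : ℝ) ≤ (P.card : ℝ) ^ (1 + c) := by
    intro p hp
    obtain ⟨i, hi, rfl⟩ := Finset.mem_image.mp hp
    obtain ⟨hprime, hmod⟩ := Nat.nth_mem_of_infinite hq i
    refine ⟨hprime, ?_, ?_⟩
    · simpa using (ZMod.natCast_eq_natCast_iff' _ 1 4).mp (by simpa using hmod)
    · have : Nat.nth q i ≤ Nat.nth q K :=
        Nat.nth_monotone hq (Nat.lt_succ_iff.mp (Finset.mem_range.mp hi))
      rw [hcard]; push_cast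
      exact (Nat.cast_le.mpr this).trans hK.le
  have h5 : ∀ p ∈ P, 5 ≤ p := fun p hp => by
    have := (hP p hp).1.two_le; have := (hP p hp).2.1; omega
  have hL := log_div_log_log_prod_le (by omega) (fun p hp => (h5 p hp).trans' (by norm_num)) hc.le
    fun p hp => (hP p hp).2.2
  refine ⟨P, fun p hp => ⟨(hP p hp).1, (hP p hp).2.1⟩, ?_, ?_⟩
  · calc 16 ≤ 5 ^ 2 := by norm_num
      _ ≤ 5 ^ P.card := Nat.pow_le_pow_right (by norm_num) (by omega)
      _ ≤ ∏ p ∈ P, p := Finset.pow_card_le_prod _ _ _ h5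
  · calc A + B * exp (δ * (log (∏ p ∈ P, p : ℕ) / log (log (∏ p ∈ P, p : ℕ))))
        ≤ A + B * exp (δ * (1 + c) * P.card) := by
          rw [mul_assoc δ]; gcongr
      _ ≤ 2 ^ P.card := by rw [hcard]; push_cast at hKexp ⊢; exact hKexp

theorem card_le_RS {a : ℕ → ℕ} (ha : StrictMonoOn a (Set.Ici 1)) {m : ℕ} {G : Finset (ℕ × ℕ)}
    (hG : ∀ q ∈ G, 1 ≤ q.1 ∧ q.1 ≤ q.2 ∧ a q.1 + a q.2 = m) :
    G.card ≤ RS (a '' Set.Ici 1) m := by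
  have hfin : {p : ℕ × ℕ | p.1 ∈ a '' Set.Ici 1 ∧ p.2 ∈ a '' Set.Ici 1 ∧ p.1 ≤ p.2 ∧
      p.1 + p.2 = m}.Finite :=
    ((Set.finite_Iic m).prod (Set.finite_Iic m)).subset fun p ⟨_, _, _, hp⟩ =>
      ⟨Set.mem_Iic.mpr (by omega), Set.mem_Iic.mpr (by omega)⟩
  have : Finite {p : ℕ × ℕ // p.1 ∈ a '' Set.Ici 1 ∧ p.2 ∈ a '' Set.Ici 1 ∧ p.1 ≤ p.2 ∧
      p.1 + p.2 = m} := hfin.to_subtype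
  rw [← Nat.card_eq_finsetCard]
  refine Nat.card_le_card_of_injective (fun q => ⟨(a q.1.1, a q.1.2), ?_⟩) fun q r hqr => ?_
  · obtain ⟨h1, h12, hm⟩ := hG q.1 q.2
    exact ⟨⟨_, h1, rfl⟩, ⟨_, h1.trans h12, rfl⟩, ha.monotoneOn h1 (h1.trans h12 : 1 ≤ _) h12, hm⟩
  · obtain ⟨hq1, hq12, -⟩ := hG q.1 q.2
    obtain ⟨hr1, hr12, -⟩ := hG r.1 r.2
    simp only [Subtype.mk.injEq, Prod.mk.injEq] at hqr
    exact Subtype.ext (Prod.ext (ha.injOn hq1 hr1 hqr.1)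
      (ha.injOn (hq1.trans hq12 : 1 ≤ _) (hr1.trans hr12 : 1 ≤ _) hqr.2))

theorem exists_lt_RS_of_sq_add_sq_eq {a : ℕ → ℕ} (ha : StrictMonoOn a (Set.Ici 1)) {n M : ℕ}
    {E : ℝ} {F : Finset (ℕ × ℕ)} (hF : ∀ q ∈ F, 1 ≤ q.1 ∧ q.1 ≤ q.2 ∧ q.1 ^ 2 + q.2 ^ 2 = n)
    (hE : ∀ t ≤ n, |(a t : ℝ) - t ^ 2| ≤ E) (hcard : (4 * E + 3) * (M + 1) ≤ F.card) :
    ∃ m, M < RS (a '' Set.Ici 1) m := by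
  set e := ⌈2 * E⌉₊
  have hE₀ : 0 ≤ E := (abs_nonneg _).trans (hE 0 n.zero_le)
  have hmaps : ∀ q ∈ F, a q.1 + a q.2 ∈ Finset.Icc (n - e) (n + e) := by
    intro q hq
    obtain ⟨-, -, hq⟩ := hF q hq
    have hx : q.1 ≤ n := by nlinarith
    have hy : q.2 ≤ n := by nlinarith
    have hsum : |((a q.1 + a q.2 : ℕ) : ℝ) - n| ≤ e := calc
      _ = |((a q.1 : ℝ) - q.1 ^ 2) + ((a q.2 : ℝ) - q.2 ^ 2)| := by
          rw [← hq]; push_cast; ring_nf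
      _ ≤ |(a q.1 : ℝ) - q.1 ^ 2| + |(a q.2 : ℝ) - q.2 ^ 2| := abs_add_le _ _
      _ ≤ 2 * E := by linarith [hE _ hx, hE _ hy]
      _ ≤ e := Nat.le_ceil _
    have hsum : |((a q.1 + a q.2 : ℕ) : ℤ) - n| ≤ e := by exact_mod_cast hsum
    rw [abs_le] at hsum
    rw [Finset.mem_Icc]
    omega
  have hIcc : ((Finset.Icc (n - e) (n + e)).card : ℝ) ≤ 4 * E + 3 := by
    have h₁ : (Finset.Icc (n - e) (n + e)).card ≤ 2 * e + 1 := by rw [Nat.card_Icc]; omega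
    have h₂ : (e : ℝ) < 2 * E + 1 := Nat.ceil_lt_add_one (by linarith)
    have h₁ : ((Finset.Icc (n - e) (n + e)).card : ℝ) ≤ 2 * e + 1 := by exact_mod_cast h₁
    linarith
  have hpigeon : (Finset.Icc (n - e) (n + e)).card * (M + 1) ≤ F.card := by
    exact_mod_cast (mul_le_mul_of_nonneg_right hIcc (by positivity)).trans hcard
  obtain ⟨m, -, hm⟩ := Finset.exists_le_card_fiber_of_mul_le_card_of_maps_to hmaps
    ⟨n, Finset.mem_Icc.mpr ⟨n.sub_le e, n.le_add_right e⟩⟩ hpigeon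
  refine ⟨m, (Nat.lt_succ_self M).trans_le (hm.trans (card_le_RS ha fun q hq => ?_))⟩
  obtain ⟨hqF, hqm⟩ := Finset.mem_filter.mp hq
  obtain ⟨h1, h12, -⟩ := hF q hqF
  exact ⟨h1, h12, hqm⟩

theorem stmt9 (ε : ℝ) (hε : 0 < ε) (a : ℕ → ℕ)
    (ha : ∀ m n, 1 ≤ m → m < n → a m < a n)
    (C : ℝ)
    (hC : ∀ᶠ n : ℕ in atTop,
      |(a n : ℝ) - (n : ℝ) ^ 2| ≤
        C * Real.exp ((Real.log 2 - ε) * Real.log n / Real.log (Real.log n))) :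
    ∀ M : ℕ, ∃ n : ℕ, M < RS (a '' Set.Ici 1) n := by
  intro M
  have hmono : StrictMonoOn a (Set.Ici 1) := fun m hm n _ hmn => ha m n hm hmn
  obtain ⟨hC₀, D, hD⟩ := exists_forall_abs_le_add_mul_exp hC
  obtain ⟨P, hP, hn, hPcard⟩ := exists_primes_one_mod_four_add_mul_exp_le_two_pow
    (le_max_right (log 2 - ε) 0) (max_lt (by linarith) (log_pos one_lt_two))
    (2 * (M + 1) * (4 * D + 3)) (by positivity : 0 ≤ 8 * (M + 1) * C)
  have hPne : P.Nonempty := Finset.nonempty_iff_ne_empty.mpr fun h => by simp [h] at hn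
  obtain ⟨F, hF, hFn⟩ := exists_finset_sq_add_sq_eq_prod hP hPne
  refine exists_lt_RS_of_sq_add_sq_eq hmono hFn (fun t ht => hD _ t hn ht) ?_
  have hF : (2 : ℝ) ^ P.card ≤ 2 * F.card := by exact_mod_cast hF
  linarith
end

section
/- For every k ≥ 1 there exists an integer n ≤ 100^{100^k} such that n has at least k representations as a sum of two positive cubes x³ + y³ with 0 < y ≤ x. -/
open Filter

/-!
Tangent-line doubling on the cubic x³ + y³ = c, followed by doubling on x³ - y³ = c', sends a
positive integer point (x, y) of x³ + y³ = c to a positive integer point of x³ + y³ = c·E³.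
While y/x ≤ 1/8 this step makes the ratio y/x strictly larger, but at most five times larger,
and raises the size of x to at most its 20th power. Starting from (8·5ᵐ, 1) we can therefore
take m steps; rescaling the m + 1 points of the orbit onto the last curve gives m + 1
representations of one integer n ≤ (8·5ᵐ)^(4·20ᵐ), pairwise distinct because their ratios are.
-/

namespace SumTwoCubes

def cubeSum (p : ℤ × ℤ) : ℤ := p.1 ^ 3 + p.2 ^ 3

-- Doubling at (a, b) on u³ + v³ = c gives (a(a³ + 2b³), -b(2a³ + b³)) up to the factor a³ - b³;
-- `dupPlus` drops the sign, `dupMinus` is the doubling at (a, -b) on u³ - v³ = c.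
def dupPlus (p : ℤ × ℤ) : ℤ × ℤ :=
  (p.1 * (p.1 ^ 3 + 2 * p.2 ^ 3), p.2 * (2 * p.1 ^ 3 + p.2 ^ 3))

def dupMinus (p : ℤ × ℤ) : ℤ × ℤ :=
  (p.1 * (p.1 ^ 3 - 2 * p.2 ^ 3), p.2 * (2 * p.1 ^ 3 - p.2 ^ 3))

lemma dupPlus_cube_sub (p : ℤ × ℤ) :
    (dupPlus p).1 ^ 3 - (dupPlus p).2 ^ 3 = (p.1 ^ 3 - p.2 ^ 3) ^ 3 * cubeSum p := by
  simp only [dupPlus, cubeSum]; ring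

lemma cubeSum_dupMinus (p : ℤ × ℤ) :
    cubeSum (dupMinus p) = cubeSum p ^ 3 * (p.1 ^ 3 - p.2 ^ 3) := by
  simp only [dupMinus, cubeSum]; ring

lemma dupPlus_bounds {p : ℤ × ℤ} (hy : 0 < p.2) (hyx : p.2 ≤ p.1) :
    0 < (dupPlus p).1 ∧ 0 < (dupPlus p).2 ∧ p.2 * (dupPlus p).1 ≤ p.1 * (dupPlus p).2 ∧
      p.1 * (dupPlus p).2 ≤ 2 * p.2 * (dupPlus p).1 ∧ (dupPlus p).1 ≤ 3 * p.1 ^ 4 := by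
  obtain ⟨x, y⟩ := p
  simp only [dupPlus] at *
  have hx : 0 < x := hy.trans_le hyx
  have hy3 : y ^ 3 ≤ x ^ 3 := pow_le_pow_left₀ hy.le hyx 3
  refine ⟨by positivity, by positivity, ?_, ?_, ?_⟩
  · nlinarith [mul_pos hx hy]
  · nlinarith [mul_pos hx hy, pow_pos hy 3]
  · nlinarith

lemma dupMinus_bounds {p : ℤ × ℤ} (hy : 0 < p.2) (hyx : 2 * p.2 ≤ p.1) :
    0 < (dupMinus p).2 ∧ p.2 * (dupMinus p).1 < p.1 * (dupMinus p).2 ∧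
      2 * p.1 * (dupMinus p).2 ≤ 5 * p.2 * (dupMinus p).1 ∧ (dupMinus p).1 ≤ p.1 ^ 4 := by
  obtain ⟨x, y⟩ := p
  simp only [dupMinus] at *
  have hx : 0 < x := by linarith
  have hy3 : 8 * y ^ 3 ≤ x ^ 3 := by
    have := pow_le_pow_left₀ (by positivity) hyx 3; linarith
  have hy3' : 0 < y ^ 3 := by positivity
  refine ⟨by nlinarith, ?_, ?_, ?_⟩
  · nlinarith [mul_pos hx hy]
  · nlinarith [mul_pos hx hy]
  · nlinarith

def step (p : ℤ × ℤ) : ℤ × ℤ := dupMinus (dupPlus p)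

def stepScale (p : ℤ × ℤ) : ℤ := (p.1 ^ 3 - p.2 ^ 3) * cubeSum (dupPlus p)

lemma cubeSum_step (p : ℤ × ℤ) : cubeSum (step p) = stepScale p ^ 3 * cubeSum p := by
  rw [step, cubeSum_dupMinus, dupPlus_cube_sub, stepScale]; ring

lemma stepScale_pos {p : ℤ × ℤ} (hy : 0 < p.2) (hyx : p.2 < p.1) : 0 < stepScale p := by
  have h3 : p.2 ^ 3 < p.1 ^ 3 := pow_lt_pow_left₀ hyx hy.le three_ne_zero
  obtain ⟨hx, hq, -⟩ := dupPlus_bounds hy hyx.le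
  exact mul_pos (by linarith) (add_pos (pow_pos hx 3) (pow_pos hq 3))

lemma step_bounds {p : ℤ × ℤ} (hy : 0 < p.2) (hyx : 8 * p.2 ≤ p.1) :
    0 < (step p).2 ∧ p.2 * (step p).1 < p.1 * (step p).2 ∧
      p.1 * (step p).2 ≤ 5 * p.2 * (step p).1 ∧ (step p).1 ≤ p.1 ^ 20 := by
  obtain ⟨hXpos, hz, hyz, hzy, hX⟩ := dupPlus_bounds hy (by linarith)
  set q := dupPlus p
  have hx : 0 < p.1 := by linarith
  have hzx : 2 * q.2 ≤ q.1 := by nlinarith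
  obtain ⟨hw, hzw, hwz, hW⟩ := dupMinus_bounds hz hzx
  rw [show step p = dupMinus q from rfl]
  have hWpos : 0 < (dupMinus q).1 := by nlinarith
  refine ⟨hw, ?_, ?_, ?_⟩
  · have h1 := mul_lt_mul_of_pos_left hzw (mul_pos hy hXpos)
    have h2 := mul_le_mul_of_nonneg_right hyz (mul_pos hXpos hw).le
    refine lt_of_mul_lt_mul_left (a := q.1 * q.2) ?_ (mul_pos hXpos hz).le
    linarith
  · have h1 := mul_le_mul_of_nonneg_left hwz hx.le
    have h2 := mul_le_mul_of_nonneg_right hzy (mul_pos (by norm_num : (0:ℤ) < 5) hWpos).le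
    refine le_of_mul_le_mul_left (a := 2 * q.1) ?_ (by positivity)
    linarith
  · calc (dupMinus q).1 ≤ q.1 ^ 4 := hW
      _ ≤ (3 * p.1 ^ 4) ^ 4 := pow_le_pow_left₀ hXpos.le hX 4
      _ = 81 * p.1 ^ 16 := by ring
      _ ≤ p.1 ^ 4 * p.1 ^ 16 := by
        gcongr
        nlinarith [pow_le_pow_left₀ (by norm_num) (show (8:ℤ) ≤ p.1 by linarith) 4]
      _ = p.1 ^ 20 := by ring

lemma iterate_step_bounds {p : ℤ × ℤ} (hy : 0 < p.2) {i j : ℕ}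
    (hx : 8 * 5 ^ (i + j) * p.2 ≤ p.1) :
    0 < (step^[i] p).2 ∧ 8 * 5 ^ j * (step^[i] p).2 ≤ (step^[i] p).1 ∧
      (step^[i] p).1 ≤ p.1 ^ 20 ^ i := by
  induction i generalizing p with
  | zero => simpa [hy] using hx
  | succ i ih =>
    have h5 : (1 : ℤ) ≤ 5 ^ (i + 1 + j) := one_le_pow₀ (by norm_num)
    obtain ⟨hy', -, hdec, hbd⟩ := step_bounds hy (by nlinarith)
    have hx' : 8 * 5 ^ (i + j) * (step p).2 ≤ (step p).1 := by
      have h := mul_le_mul_of_nonneg_right hx hy'.le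
      rw [Nat.add_right_comm, pow_succ] at h
      nlinarith
    obtain ⟨h1, h2, h3⟩ := ih hy' hx'
    have hW : 0 ≤ (step p).1 := le_trans (by positivity) hx'
    rw [Function.iterate_succ_apply]
    refine ⟨h1, h2, h3.trans ?_⟩
    calc (step p).1 ^ 20 ^ i ≤ (p.1 ^ 20) ^ 20 ^ i := pow_le_pow_left₀ hW hbd _
      _ = p.1 ^ 20 ^ (i + 1) := by rw [← pow_mul, pow_succ']

lemma iterate_step_bounds_of_le {p : ℤ × ℤ} (hy : 0 < p.2) {m i : ℕ}
    (hx : 8 * 5 ^ m * p.2 ≤ p.1) (hi : i ≤ m) :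
    0 < (step^[i] p).2 ∧ 8 * (step^[i] p).2 ≤ (step^[i] p).1 := by
  obtain ⟨hy', hx', -⟩ :=
    iterate_step_bounds (i := i) (j := m - i) hy (by rwa [Nat.add_sub_cancel' hi])
  have h5 : (1 : ℤ) ≤ 5 ^ (m - i) := one_le_pow₀ (by norm_num)
  exact ⟨hy', le_trans (by nlinarith) hx'⟩

def ratio (p : ℤ × ℤ) : ℚ := p.2 / p.1

lemma ratio_smul {c : ℤ} (hc : c ≠ 0) (p : ℤ × ℤ) : ratio (c • p) = ratio p := by
  simp only [ratio, Prod.smul_fst, Prod.smul_snd, smul_eq_mul, Int.cast_mul]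
  exact mul_div_mul_left _ _ (Int.cast_ne_zero.mpr hc)

lemma cubeSum_smul (c : ℤ) (p : ℤ × ℤ) : cubeSum (c • p) = c ^ 3 * cubeSum p := by
  simp only [cubeSum, Prod.smul_fst, Prod.smul_snd, smul_eq_mul]; ring

lemma ratio_lt_ratio_step {p : ℤ × ℤ} (hy : 0 < p.2) (hyx : 8 * p.2 ≤ p.1) :
    ratio p < ratio (step p) := by
  obtain ⟨hw, hinc, hdec, -⟩ := step_bounds hy hyx
  have hx : (0 : ℚ) < p.1 := by exact_mod_cast (by linarith : 0 < p.1)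
  have hW : (0 : ℚ) < (step p).1 := by exact_mod_cast (by nlinarith : 0 < (step p).1)
  rw [ratio, ratio, div_lt_div_iff₀ hx hW]
  exact_mod_cast hinc.trans_eq (mul_comm _ _)

lemma strictMonoOn_ratio_iterate_step {p : ℤ × ℤ} (hy : 0 < p.2) {m : ℕ}
    (hx : 8 * 5 ^ m * p.2 ≤ p.1) : StrictMonoOn (fun i => ratio (step^[i] p)) (Set.Iic m) := by
  refine strictMonoOn_Iic_of_lt_succ fun i hi => ?_
  obtain ⟨hy', hx'⟩ := iterate_step_bounds_of_le hy hx hi.le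
  rw [Nat.succ_eq_succ, Function.iterate_succ_apply']
  exact ratio_lt_ratio_step hy' hx'

lemma cubeSum_iterate_step (p : ℤ × ℤ) {i n : ℕ} (hin : i ≤ n) :
    cubeSum (step^[n] p) =
      (∏ j ∈ Finset.Ico i n, stepScale (step^[j] p)) ^ 3 * cubeSum (step^[i] p) := by
  induction n, hin using Nat.le_induction with
  | base => simp
  | succ n hin ih =>
    rw [Function.iterate_succ_apply', cubeSum_step, ih, Finset.prod_Ico_succ_top hin]
    ring

def orbitRep (p : ℤ × ℤ) (m i : ℕ) : ℤ × ℤ :=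
  (∏ j ∈ Finset.Ico i m, stepScale (step^[j] p)) • step^[i] p

lemma orbitRep_spec {p : ℤ × ℤ} (hy : 0 < p.2) {m i : ℕ} (hx : 8 * 5 ^ m * p.2 ≤ p.1)
    (hi : i ≤ m) :
    0 < (orbitRep p m i).2 ∧ (orbitRep p m i).2 ≤ (orbitRep p m i).1 ∧
      cubeSum (orbitRep p m i) = cubeSum (step^[m] p) ∧
      ratio (orbitRep p m i) = ratio (step^[i] p) := by
  have hS : 0 < ∏ j ∈ Finset.Ico i m, stepScale (step^[j] p) := by
    refine Finset.prod_pos fun j hj => ?_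
    obtain ⟨hyj, hxj⟩ := iterate_step_bounds_of_le hy hx (Finset.mem_Ico.mp hj).2.le
    exact stepScale_pos hyj (by linarith)
  obtain ⟨hyi, hxi⟩ := iterate_step_bounds_of_le hy hx hi
  simp only [orbitRep, Prod.smul_fst, Prod.smul_snd, smul_eq_mul]
  refine ⟨mul_pos hS hyi, mul_le_mul_of_nonneg_left (by linarith) hS.le, ?_, ?_⟩
  · rw [cubeSum_smul, cubeSum_iterate_step p hi]
  · exact ratio_smul hS.ne' _

def cubeReps (n : ℕ) : Finset (ℕ × ℕ) :=
  (Finset.range (n + 1) ×ˢ Finset.range (n + 1)).filter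
    (fun p => 0 < p.2 ∧ p.2 ≤ p.1 ∧ p.1 ^ 3 + p.2 ^ 3 = n)

lemma card_le_card_cubeReps {n : ℕ} {s : Finset (ℤ × ℤ)}
    (hs : ∀ q ∈ s, 0 < q.2 ∧ q.2 ≤ q.1 ∧ cubeSum q = n) : s.card ≤ (cubeReps n).card := by
  refine Finset.card_le_card_of_injOn (fun q => (q.1.toNat, q.2.toNat)) (fun q hq => ?_) ?_
  · obtain ⟨hy, hyx, hq⟩ := hs q hq
    have hx : q.1 ≤ n := by
      rw [cubeSum] at hq
      linarith [pow_pos hy 3, le_self_pow₀ (show 1 ≤ q.1 by omega) three_ne_zero]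
    show (q.1.toNat, q.2.toNat) ∈ cubeReps n
    simp only [cubeReps, Finset.mem_filter, Finset.mem_product, Finset.mem_range]
    refine ⟨⟨by omega, by omega⟩, by omega, by omega, ?_⟩
    have : ((q.1.toNat ^ 3 + q.2.toNat ^ 3 : ℕ) : ℤ) = n := by
      push_cast [Int.toNat_of_nonneg (by omega : 0 ≤ q.1), Int.toNat_of_nonneg hy.le]
      exact hq
    exact_mod_cast this
  · intro q hq q' hq' h
    obtain ⟨hy, hyx, -⟩ := hs q hq
    obtain ⟨hy', hyx', -⟩ := hs q' hq'
    simp only [Prod.mk.injEq] at h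
    exact Prod.ext (by omega) (by omega)

lemma exists_le_card_cubeReps (m : ℕ) :
    ∃ n : ℕ, n ≤ (8 * 5 ^ m) ^ (4 * 20 ^ m) ∧ m + 1 ≤ (cubeReps n).card := by
  set p : ℤ × ℤ := (8 * 5 ^ m, 1)
  have hy : 0 < p.2 := one_pos
  have hx : 8 * 5 ^ m * p.2 ≤ p.1 := (mul_one _).le
  obtain ⟨hym, hxm, hbd⟩ := iterate_step_bounds (i := m) (j := 0) hy (by simpa using hx)
  rw [pow_zero, mul_one] at hxm
  set q := step^[m] p
  have hq : 0 < cubeSum q := add_pos (pow_pos (by linarith) 3) (pow_pos hym 3)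
  have hN : cubeSum q ≤ ((8 * 5 ^ m) ^ (4 * 20 ^ m) : ℕ) := by
    have hq3 : q.2 ^ 3 ≤ q.1 ^ 3 := pow_le_pow_left₀ hym.le (by linarith) 3
    calc cubeSum q ≤ q.1 * q.1 ^ 3 := by
          rw [cubeSum]; nlinarith [pow_pos hym 3]
      _ = q.1 ^ 4 := by ring
      _ ≤ (p.1 ^ 20 ^ m) ^ 4 := pow_le_pow_left₀ (by linarith) hbd 4
      _ = _ := by push_cast [p]; ring
  refine ⟨(cubeSum q).toNat, by omega, ?_⟩
  have hrep : ∀ i ≤ m, 0 < (orbitRep p m i).2 ∧ (orbitRep p m i).2 ≤ (orbitRep p m i).1 ∧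
      cubeSum (orbitRep p m i) = ((cubeSum q).toNat : ℤ) := by
    intro i hi
    obtain ⟨h1, h2, h3, -⟩ := orbitRep_spec hy hx hi
    exact ⟨h1, h2, by rw [h3, Int.toNat_of_nonneg hq.le]⟩
  have hinj : Set.InjOn (orbitRep p m) (Finset.range (m + 1)) := by
    intro i hi j hj hij
    have hi' : i ≤ m := Nat.lt_succ_iff.mp (Finset.mem_range.mp hi)
    have hj' : j ≤ m := Nat.lt_succ_iff.mp (Finset.mem_range.mp hj)
    refine (strictMonoOn_ratio_iterate_step hy hx).injOn hi' hj' ?_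
    simpa only [(orbitRep_spec hy hx hi').2.2.2, (orbitRep_spec hy hx hj').2.2.2] using
      congrArg ratio hij
  calc m + 1 = ((Finset.range (m + 1)).image (orbitRep p m)).card := by
        rw [Finset.card_image_of_injOn hinj, Finset.card_range]
    _ ≤ (cubeReps (cubeSum q).toNat).card := card_le_card_cubeReps fun r hr => by
        obtain ⟨i, hi, rfl⟩ := Finset.mem_image.mp hr
        exact hrep i (Nat.lt_succ_iff.mp (Finset.mem_range.mp hi))

lemma pow_le_hundred_pow_hundred_pow (m : ℕ) :
    (8 * 5 ^ m) ^ (4 * 20 ^ m) ≤ 100 ^ 100 ^ (m + 1) := by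
  have hbase : 8 * 5 ^ m ≤ 100 ^ (m + 1) := by
    rw [pow_succ']
    exact Nat.mul_le_mul (by norm_num) (Nat.pow_le_pow_left (by norm_num) m)
  have hexp : (m + 1) * (4 * 20 ^ m) ≤ 100 ^ (m + 1) := by
    have h : m + 1 ≤ 5 ^ (m + 1) := (Nat.lt_pow_self (by norm_num)).le
    calc (m + 1) * (4 * 20 ^ m) ≤ 5 ^ (m + 1) * (20 * 20 ^ m) := by gcongr; omega
      _ = 100 ^ (m + 1) := by rw [← pow_succ', ← mul_pow]; norm_num
  calc (8 * 5 ^ m) ^ (4 * 20 ^ m) ≤ (100 ^ (m + 1)) ^ (4 * 20 ^ m) := Nat.pow_le_pow_left hbase _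
    _ = 100 ^ ((m + 1) * (4 * 20 ^ m)) := (pow_mul _ _ _).symm
    _ ≤ 100 ^ 100 ^ (m + 1) := Nat.pow_le_pow_right (by norm_num) hexp

end SumTwoCubes

theorem stmt12_general (k : ℕ) :
    ∃ n : ℕ, n ≤ 100 ^ (100 ^ k) ∧
      k ≤ ((Finset.range (n+1) ×ˢ Finset.range (n+1)).filter
        (fun p => 0 < p.2 ∧ p.2 ≤ p.1 ∧ p.1 ^ 3 + p.2 ^ 3 = n)).card := by
  cases k with
  | zero => exact ⟨0, by norm_num, Nat.zero_le _⟩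
  | succ m =>
    obtain ⟨n, hn, hcard⟩ := SumTwoCubes.exists_le_card_cubeReps m
    exact ⟨n, hn.trans (SumTwoCubes.pow_le_hundred_pow_hundred_pow m), hcard⟩

theorem stmt12 (k : ℕ) (hk : 1 ≤ k) :
    ∃ n : ℕ, n ≤ 100 ^ (100 ^ k) ∧
      k ≤ ((Finset.range (n+1) ×ˢ Finset.range (n+1)).filter
        (fun p => 0 < p.2 ∧ p.2 ≤ p.1 ∧ p.1 ^ 3 + p.2 ^ 3 = n)).card :=
  stmt12_general k
end

section
/- With the sequences u_i, v_i from the recursive construction (u_1 = 4^{k−1}, v_1 = 1, and the Vieta-type recursion), the ratios u_i/v_i are strictly decreasing in i; consequently the k pairs (u_i/w_i · w_k, v_i/w_i · w_k), 1 ≤ i ≤ k, are pairwise distinct representations of (64^{k−1}+1)·w_k³ as a sum of two positive cubes. -/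
/-! The step `(a, b) ↦ (a', b')` of the recursion satisfies
`a b' - a' b = 3ab (a⁶(a³+2b³)³ + b⁶(2a³+b³)³) > 0`, so the ratios `u_i / v_i` strictly
decrease. The pair `(x_i, y_i)` is `(u_i, v_i)` rescaled by `w_k / w_i`, which preserves the
ratio, so distinct indices give distinct pairs; the rescaling turns `u_i³ + v_i³ = N w_i³` into
`x_i³ + y_i³ = N w_k³`. -/

open Filter

open Set

section CubeStep

variable {R : Type*} [CommRing R]

def cubeStepFst (a b : R) : R :=
  a * (a ^ 3 + 2 * b ^ 3) * (a ^ 3 * (a ^ 3 + 2 * b ^ 3) ^ 3 - 2 * b ^ 3 * (2 * a ^ 3 + b ^ 3) ^ 3)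

def cubeStepSnd (a b : R) : R :=
  b * (2 * a ^ 3 + b ^ 3) * (2 * a ^ 3 * (a ^ 3 + 2 * b ^ 3) ^ 3 - b ^ 3 * (2 * a ^ 3 + b ^ 3) ^ 3)

theorem mul_cubeStepSnd_sub_cubeStepFst_mul (a b : R) :
    a * cubeStepSnd a b - cubeStepFst a b * b =
      3 * a * b * (a ^ 6 * (a ^ 3 + 2 * b ^ 3) ^ 3 + b ^ 6 * (2 * a ^ 3 + b ^ 3) ^ 3) := by
  unfold cubeStepFst cubeStepSnd
  ring

theorem cubeStepFst_mul_lt_mul_cubeStepSnd [LinearOrder R] [IsStrictOrderedRing R] {a b : R}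
    (ha : 0 < a) (hb : 0 < b) : cubeStepFst a b * b < a * cubeStepSnd a b :=
  sub_pos.mp (mul_cubeStepSnd_sub_cubeStepFst_mul a b ▸ by positivity)

end CubeStep

theorem strictAntiOn_div_of_mul_lt {K : Type*} [Field K] [LinearOrder K] [IsStrictOrderedRing K]
    {u v : ℕ → K} {m n : ℕ} (hv : ∀ i ∈ Icc m n, 0 < v i)
    (hstep : ∀ i, m ≤ i → i + 1 ≤ n → u (i + 1) * v i < u i * v (i + 1)) :
    StrictAntiOn (fun i => u i / v i) (Icc m n) := by
  refine strictAntiOn_of_add_one_lt ordConnected_Icc fun i _ hi hi1 => ?_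
  rw [div_lt_div_iff₀ (hv _ hi1) (hv _ hi)]
  exact hstep i hi.1 hi1.2

section Rescaling

variable {R : Type*} [CommRing R]

theorem mul_eq_mul_of_rescale_eq [IsDomain R] {x y u v w u' v' w' W : R} (hW : W ≠ 0)
    (hx : x * w = u * W) (hy : y * w = v * W) (hx' : x * w' = u' * W) (hy' : y * w' = v' * W) :
    u * v' = u' * v := by
  have h : u * v' * W ^ 2 = u' * v * W ^ 2 := by
    linear_combination (-(y * w')) * hx - (u * W) * hy' + (y * w) * hx' + (u' * W) * hy
  exact mul_right_cancel₀ (pow_ne_zero 2 hW) h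

theorem add_pow_three_eq_of_rescale [IsDomain R] {x y u v w W N : R} (hw : w ≠ 0)
    (hx : x * w = u * W) (hy : y * w = v * W) (hcube : u ^ 3 + v ^ 3 = N * w ^ 3) :
    x ^ 3 + y ^ 3 = N * W ^ 3 := by
  have h : (x ^ 3 + y ^ 3) * w ^ 3 = N * W ^ 3 * w ^ 3 := by
    linear_combination (x ^ 2 * w ^ 2 + x * w * (u * W) + u ^ 2 * W ^ 2) * hx
      + (y ^ 2 * w ^ 2 + y * w * (v * W) + v ^ 2 * W ^ 2) * hy + W ^ 3 * hcube
  exact mul_right_cancel₀ (pow_ne_zero 3 hw) h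

theorem pos_of_add_pow_three_eq [LinearOrder R] [IsStrictOrderedRing R] {a b c N : R}
    (ha : 0 < a) (hb : 0 < b) (hN : 0 < N) (h : a ^ 3 + b ^ 3 = N * c ^ 3) : 0 < c := by
  have hc3 : 0 < N * c ^ 3 := h ▸ by positivity
  exact (Odd.pow_pos_iff (by decide)).mp (pos_of_mul_pos_right hc3 hN.le)

end Rescaling

theorem stmt15_general (k : ℕ) (hk : 1 ≤ k) (u v w : ℕ → ℤ)
    (hu : ∀ i, 1 ≤ i → i + 1 ≤ k →
      u (i+1) = u i * (u i ^ 3 + 2 * v i ^ 3) *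
        (u i ^ 3 * (u i ^ 3 + 2 * v i ^ 3) ^ 3 - 2 * v i ^ 3 * (2 * u i ^ 3 + v i ^ 3) ^ 3))
    (hv : ∀ i, 1 ≤ i → i + 1 ≤ k →
      v (i+1) = v i * (2 * u i ^ 3 + v i ^ 3) *
        (2 * u i ^ 3 * (u i ^ 3 + 2 * v i ^ 3) ^ 3 - v i ^ 3 * (2 * u i ^ 3 + v i ^ 3) ^ 3))
    (hknown : ∀ i, 1 ≤ i → i ≤ k →
      u i ^ 3 + v i ^ 3 = (64 ^ (k - 1) + 1) * w i ^ 3 ∧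
      0 < v i ∧ 4 ^ (k - i) * v i ≤ u i ∧ w i ∣ w k)
    (x y : ℕ → ℤ)
    (hxy : ∀ i, 1 ≤ i → i ≤ k → x i * w i = u i * w k ∧ y i * w i = v i * w k) :
    (∀ i, 1 ≤ i → i + 1 ≤ k → u (i+1) * v i < u i * v (i+1)) ∧
    (∀ i j, 1 ≤ i → i ≤ k → 1 ≤ j → j ≤ k → i ≠ j → (x i, y i) ≠ (x j, y j)) ∧
    (∀ i, 1 ≤ i → i ≤ k →
      0 < y i ∧ y i ≤ x i ∧ x i ^ 3 + y i ^ 3 = (64 ^ (k - 1) + 1) * w k ^ 3) := by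
  have hpos : ∀ i, 1 ≤ i → i ≤ k → 0 < v i ∧ v i ≤ u i ∧ 0 < w i := by
    intro i hi hik
    obtain ⟨hcube, hv0, hle, -⟩ := hknown i hi hik
    have hvu : v i ≤ u i := (le_mul_of_one_le_left hv0.le (one_le_pow₀ (by norm_num))).trans hle
    exact ⟨hv0, hvu, pos_of_add_pow_three_eq (hv0.trans_le hvu) hv0 (by positivity) hcube⟩
  have hstep : ∀ i, 1 ≤ i → i + 1 ≤ k → u (i+1) * v i < u i * v (i+1) := by
    intro i hi hik
    obtain ⟨hv0, hvu, -⟩ := hpos i hi (by omega)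
    rw [hu i hi hik, hv i hi hik]
    exact cubeStepFst_mul_lt_mul_cubeStepSnd (hv0.trans_le hvu) hv0
  have hanti : StrictAntiOn (fun i => (u i : ℚ) / v i) (Icc 1 k) :=
    strictAntiOn_div_of_mul_lt (fun i hi => by exact_mod_cast (hpos i hi.1 hi.2).1)
      (fun i hi hik => by exact_mod_cast hstep i hi hik)
  have hwk : 0 < w k := (hpos k hk le_rfl).2.2
  refine ⟨hstep, ?_, fun i hi hik => ?_⟩
  · intro i j hi hik hj hjk hij hxyij
    obtain ⟨hxi, hyi⟩ := hxy i hi hik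
    obtain ⟨hxj, hyj⟩ := hxy j hj hjk
    obtain ⟨hxe, hye⟩ := Prod.mk.inj hxyij
    have hcross := mul_eq_mul_of_rescale_eq hwk.ne' (hxe ▸ hxi) (hye ▸ hyi) hxj hyj
    have hratio : (u i : ℚ) / v i = u j / v j := by
      rw [div_eq_div_iff (by exact_mod_cast (hpos i hi hik).1.ne')
        (by exact_mod_cast (hpos j hj hjk).1.ne')]
      exact_mod_cast hcross
    exact hij (hanti.injOn ⟨hi, hik⟩ ⟨hj, hjk⟩ hratio)
  · obtain ⟨hx, hy⟩ := hxy i hi hik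
    obtain ⟨hv0, hvu, hw0⟩ := hpos i hi hik
    refine ⟨pos_of_mul_pos_left (hy ▸ mul_pos hv0 hwk) hw0.le, ?_,
      add_pow_three_eq_of_rescale hw0.ne' hx hy (hknown i hi hik).1⟩
    exact le_of_mul_le_mul_right (hy ▸ hx ▸ mul_le_mul_of_nonneg_right hvu hwk.le) hw0

theorem stmt15 (k : ℕ) (hk : 1 ≤ k) (u v w : ℕ → ℤ)
    (hu1 : u 1 = 4 ^ (k - 1)) (hv1 : v 1 = 1) (hw1 : w 1 = 1)
    (hu : ∀ i, 1 ≤ i → i + 1 ≤ k →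
      u (i+1) = u i * (u i ^ 3 + 2 * v i ^ 3) *
        (u i ^ 3 * (u i ^ 3 + 2 * v i ^ 3) ^ 3 - 2 * v i ^ 3 * (2 * u i ^ 3 + v i ^ 3) ^ 3))
    (hv : ∀ i, 1 ≤ i → i + 1 ≤ k →
      v (i+1) = v i * (2 * u i ^ 3 + v i ^ 3) *
        (2 * u i ^ 3 * (u i ^ 3 + 2 * v i ^ 3) ^ 3 - v i ^ 3 * (2 * u i ^ 3 + v i ^ 3) ^ 3))
    (hw : ∀ i, 1 ≤ i → i + 1 ≤ k →
      w (i+1) = (u i ^ 3 - v i ^ 3) *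
        (u i ^ 3 * (u i ^ 3 + 2 * v i ^ 3) ^ 3 + v i ^ 3 * (2 * u i ^ 3 + v i ^ 3) ^ 3) * w i)
    (hknown : ∀ i, 1 ≤ i → i ≤ k →
      u i ^ 3 + v i ^ 3 = (64 ^ (k - 1) + 1) * w i ^ 3 ∧
      0 < v i ∧ 4 ^ (k - i) * v i ≤ u i ∧ w i ∣ w k)
    (x y : ℕ → ℤ)
    (hxy : ∀ i, 1 ≤ i → i ≤ k → x i * w i = u i * w k ∧ y i * w i = v i * w k) :
    (∀ i, 1 ≤ i → i + 1 ≤ k → u (i+1) * v i < u i * v (i+1)) ∧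
    (∀ i j, 1 ≤ i → i ≤ k → 1 ≤ j → j ≤ k → i ≠ j → (x i, y i) ≠ (x j, y j)) ∧
    (∀ i, 1 ≤ i → i ≤ k →
      0 < y i ∧ y i ≤ x i ∧ x i ^ 3 + y i ^ 3 = (64 ^ (k - 1) + 1) * w k ^ 3) :=
  stmt15_general k hk u v w hu hv hknown x y hxy
end

section
/- There exists a set A = {a_1 < a_2 < ...} of positive integers with a_n = n³ + O(n^{5/2}·√(log n)) such that R_A(n) is bounded (i.e., s_A < ∞). -/
open Filter

/-!
The greedy sequence does better than the random one: `n ^ 3 ≤ a n ≤ n ^ 3 + n ^ 2` and `R_A ≤ 4`.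
Take for `a (n + 1)` the least `x ≥ (n + 1) ^ 3` such that neither `x + x` nor any `a j + x`,
`j ≤ n`, already has four representations by `a 1, …, a n`; then no sum ever gets a fifth one.
Such an `x` exists in `[N ^ 3, N ^ 3 + N ^ 2]`, `N = n + 1`: the `a m` are near-cubes, and cubes of
integers above `N / 2` are more than `3 N ^ 2 / 4` apart, so for each `i` at most four sums
`a i + a j` fall in a window of length `2 N ^ 2` above `N ^ 3`. Such a window thus contains at most
`n` values with four representations, each of the `n + 1` conditions on `x` excludes at most `n`
points of `[N ^ 3, N ^ 3 + N ^ 2]`, and `n (n + 1) < N ^ 2 + 1`.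
-/

section Greedy

open Finset

def indexPairs (n : ℕ) : Finset (ℕ × ℕ) := {p ∈ Icc 1 n ×ˢ Icc 1 n | p.1 ≤ p.2}

@[simp]
lemma mem_indexPairs {n : ℕ} {p : ℕ × ℕ} : p ∈ indexPairs n ↔ 1 ≤ p.1 ∧ p.1 ≤ p.2 ∧ p.2 ≤ n := by
  simp only [indexPairs, mem_filter, mem_product, mem_Icc]
  omega

def repCount (a : ℕ → ℕ) (n v : ℕ) : ℕ := #{p ∈ indexPairs n | a p.1 + a p.2 = v}

lemma repCount_congr {a b : ℕ → ℕ} {n : ℕ} (h : Set.EqOn a b (Set.Icc 1 n)) :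
    repCount a n = repCount b n := by
  ext v
  refine congrArg card (filter_congr fun p hp => ?_)
  rw [mem_indexPairs] at hp
  rw [h ⟨hp.1, by omega⟩, h ⟨by omega, hp.2.2⟩]

lemma repCount_eq_zero {a : ℕ → ℕ} {n v : ℕ} (h : ∀ m ∈ Icc 1 n, 2 * a m < v) :
    repCount a n v = 0 := by
  refine card_eq_zero.2 (filter_eq_empty_iff.2 fun p hp => ?_)
  rw [mem_indexPairs] at hp
  have h₁ := h p.1 (mem_Icc.2 ⟨hp.1, by omega⟩)
  have h₂ := h p.2 (mem_Icc.2 ⟨by omega, hp.2.2⟩)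
  omega

lemma repCount_succ_le {a : ℕ → ℕ} {n : ℕ} (v : ℕ) :
    repCount a (n + 1) v ≤ repCount a n v + #{j ∈ Icc 1 (n + 1) | a j + a (n + 1) = v} := by
  refine (card_le_card fun p hp => ?_).trans ((card_union_le _ _).trans
    (Nat.add_le_add_left (card_image_le (f := fun j => (j, n + 1))) _))
  obtain ⟨hp, hv⟩ := mem_filter.1 hp
  rw [mem_indexPairs] at hp
  rcases Nat.lt_or_ge p.2 (n + 1) with hlt | hge
  · exact mem_union_left _ (mem_filter.2 ⟨mem_indexPairs.2 ⟨hp.1, hp.2.1, by omega⟩, hv⟩)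
  · have hp₂ : p.2 = n + 1 := by omega
    refine mem_union_right _ (mem_image.2 ⟨p.1, mem_filter.2 ⟨mem_Icc.2 ⟨hp.1, by omega⟩, ?_⟩, ?_⟩)
    · rwa [← hp₂]
    · rw [← hp₂]

def Admissible (M : ℕ) (a : ℕ → ℕ) (n x : ℕ) : Prop :=
  (∀ j ∈ Icc 1 n, repCount a n (a j + x) < M) ∧ repCount a n (x + x) < M

instance (M : ℕ) (a : ℕ → ℕ) (n : ℕ) : DecidablePred (Admissible M a n) :=
  fun _ => inferInstanceAs (Decidable (_ ∧ _))

lemma admissible_congr {M : ℕ} {a b : ℕ → ℕ} {n x : ℕ} (h : Set.EqOn a b (Set.Icc 1 n)) :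
    Admissible M a n x ↔ Admissible M b n x := by
  refine and_congr (forall₂_congr fun j hj => ?_) (by rw [repCount_congr h])
  rw [repCount_congr h, h (mem_Icc.1 hj)]

lemma exists_admissible_ge {M : ℕ} (hM : 0 < M) (a : ℕ → ℕ) (n lo : ℕ) :
    ∃ x, lo ≤ x ∧ Admissible M a n x := by
  have hbig : ∀ y, lo + 2 * ∑ m ∈ Icc 1 n, a m < y → repCount a n y < M := fun y hy => by
    rw [repCount_eq_zero fun m hm => by
      have := single_le_sum (f := a) (fun _ _ => Nat.zero_le _) hm
      omega]
    exact hM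
  exact ⟨lo + 2 * ∑ m ∈ Icc 1 n, a m + 1, by omega,
    fun j _ => hbig _ (by omega), hbig _ (by omega)⟩

lemma repCount_succ_le_of_admissible {M : ℕ} {a : ℕ → ℕ} {n : ℕ}
    (hinj : Set.InjOn a (Set.Icc 1 (n + 1))) (hadm : Admissible M a n (a (n + 1)))
    (hle : ∀ v, repCount a n v ≤ M) (v : ℕ) : repCount a (n + 1) v ≤ M := by
  refine (repCount_succ_le v).trans ?_
  rcases (filter (fun j => a j + a (n + 1) = v) (Icc 1 (n + 1))).eq_empty_or_nonempty
    with hempty | ⟨j, hj⟩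
  · rw [hempty, card_empty, add_zero]
    exact hle v
  · obtain ⟨hjI, rfl⟩ := mem_filter.1 hj
    have hnew : #{i ∈ Icc 1 (n + 1) | a i + a (n + 1) = a j + a (n + 1)} ≤ 1 :=
      card_le_one.2 fun i hi k hk => by
        rw [mem_filter, mem_Icc] at hi hk
        exact hinj hi.1 hk.1 (by omega)
    have hold : repCount a n (a j + a (n + 1)) < M := by
      rcases Nat.lt_or_ge j (n + 1) with hjn | hjn
      · exact hadm.1 j (mem_Icc.2 ⟨(mem_Icc.1 hjI).1, by omega⟩)
      · rw [show j = n + 1 by have := (mem_Icc.1 hjI).2; omega]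
        exact hadm.2
    omega

def NearCubes (a : ℕ → ℕ) (n : ℕ) : Prop := ∀ m ∈ Icc 1 n, m ^ 3 ≤ a m ∧ a m ≤ m ^ 3 + m ^ 2

lemma NearCubes.strictMonoOn {a : ℕ → ℕ} {n : ℕ} (h : NearCubes a n) :
    StrictMonoOn a (Set.Icc 1 n) := by
  intro m hm m' hm' hlt
  have hsucc : (m + 1) ^ 3 ≤ m' ^ 3 := Nat.pow_le_pow_left hlt 3
  have := (h m (mem_Icc.2 hm)).2
  have := (h m' (mem_Icc.2 hm')).1
  nlinarith

lemma card_le_four_of_cubes_close (S : Finset ℕ) (N : ℕ) (hhalf : ∀ m ∈ S, N < 2 * m)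
    (hclose : ∀ m₁ ∈ S, ∀ m₂ ∈ S, m₂ ^ 3 ≤ m₁ ^ 3 + 3 * N ^ 2) : #S ≤ 4 := by
  rcases S.eq_empty_or_nonempty with rfl | hS
  · simp
  have hsub : S ⊆ Icc (S.min' hS) (S.max' hS) := fun m hm =>
    mem_Icc.2 ⟨S.min'_le m hm, S.le_max' m hm⟩
  refine (card_le_card hsub).trans ?_
  rw [Nat.card_Icc]
  obtain ⟨d, hd⟩ := Nat.exists_eq_add_of_le (S.min'_le _ (S.max'_mem hS))
  set m := S.min' hS
  have hclose := hclose m (S.min'_mem hS) _ (S.max'_mem hS)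
  have hhalf := hhalf m (S.min'_mem hS)
  rw [hd] at hclose ⊢
  have hexpand : (m + d) ^ 3 = m ^ 3 + 3 * (m ^ 2 * d) + (3 * m * d ^ 2 + d ^ 3) := by ring
  have hN : N ^ 2 < m ^ 2 * 4 := by
    have := Nat.pow_lt_pow_left hhalf two_ne_zero
    rw [mul_pow] at this
    omega
  have : d < 4 := Nat.lt_of_mul_lt_mul_left (a := m ^ 2) (by omega)
  omega

section Window

variable {a : ℕ → ℕ} {n u : ℕ}

lemma card_fiber_le_four (hcube : NearCubes a n) {i : ℕ} (hi : i ∈ Icc 1 n)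
    (hu : (n + 1) ^ 3 ≤ u) :
    #{m ∈ Icc 1 n | i ≤ m ∧ a i + a m ∈ Icc u (u + 2 * (n + 1) ^ 2)} ≤ 4 := by
  have hmem : ∀ m ∈ filter (fun m => i ≤ m ∧ a i + a m ∈ Icc u (u + 2 * (n + 1) ^ 2)) (Icc 1 n),
      m ∈ Icc 1 n ∧ a i ≤ a m ∧ u ≤ a i + a m ∧ a i + a m ≤ u + 2 * (n + 1) ^ 2 := fun m hm => by
    obtain ⟨hm, him, hsum⟩ := mem_filter.1 hm
    exact ⟨hm, (hcube.strictMonoOn).monotoneOn (mem_Icc.1 hi) (mem_Icc.1 hm) him,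
      (mem_Icc.1 hsum).1, (mem_Icc.1 hsum).2⟩
  refine card_le_four_of_cubes_close _ (n + 1) (fun m hm => ?_) fun m₁ hm₁ m₂ hm₂ => ?_
  · obtain ⟨hmI, hle, hu', -⟩ := hmem m hm
    obtain ⟨-, hup⟩ := hcube m hmI
    have hsq : m ^ 2 ≤ m ^ 3 := Nat.pow_le_pow_right (mem_Icc.1 hmI).1 (by norm_num)
    have hcube_pos : 0 < m ^ 3 := pow_pos (mem_Icc.1 hmI).1 3
    have hcube_two : (2 * m) ^ 3 = 8 * m ^ 3 := by ring
    exact lt_of_pow_lt_pow_left₀ 3 (Nat.zero_le _) (by omega)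
  · obtain ⟨hm₁, -, hu₁, -⟩ := hmem m₁ hm₁
    obtain ⟨hm₂, -, -, hw₂⟩ := hmem m₂ hm₂
    have hsq : m₁ ^ 2 ≤ (n + 1) ^ 2 :=
      Nat.pow_le_pow_left (by have := (mem_Icc.1 hm₁).2; omega) 2
    have := hcube m₁ hm₁
    have := hcube m₂ hm₂
    omega

lemma card_pairs_sum_mem_Icc_le (hcube : NearCubes a n) (hu : (n + 1) ^ 3 ≤ u) :
    #{p ∈ indexPairs n | a p.1 + a p.2 ∈ Icc u (u + 2 * (n + 1) ^ 2)} ≤ 4 * n := by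
  have hfst : ∀ p ∈ filter (fun p => a p.1 + a p.2 ∈ Icc u (u + 2 * (n + 1) ^ 2)) (indexPairs n),
      p.1 ∈ Icc 1 n := fun p hp => by
    have := mem_indexPairs.1 (mem_filter.1 hp).1
    exact mem_Icc.2 ⟨this.1, by omega⟩
  refine (card_le_mul_card_image_of_maps_to hfst 4 fun i hi => ?_).trans
    (by rw [Nat.card_Icc]; omega)
  refine (card_le_card_of_injOn Prod.snd (fun p hp => ?_) ?_).trans
    (card_fiber_le_four hcube hi hu)
  · simp only [mem_coe, mem_filter, mem_indexPairs] at hp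
    obtain ⟨⟨⟨hp₁, hp₁₂, hp₂⟩, hsum⟩, rfl⟩ := hp
    exact mem_filter.2 ⟨mem_Icc.2 ⟨by omega, hp₂⟩, hp₁₂, hsum⟩
  · intro p hp q hq hpq
    exact Prod.ext ((mem_filter.1 hp).2.trans (mem_filter.1 hq).2.symm) hpq

lemma mul_card_saturated_le (M : ℕ) (a : ℕ → ℕ) (n : ℕ) (W : Finset ℕ) :
    M * #{v ∈ W | M ≤ repCount a n v} ≤ #{p ∈ indexPairs n | a p.1 + a p.2 ∈ W} := by
  refine (mul_card_image_le_card_of_maps_to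
      (s := {p ∈ indexPairs n | a p.1 + a p.2 ∈ {v ∈ W | M ≤ repCount a n v}})
      (f := fun p => a p.1 + a p.2) (fun p hp => (mem_filter.1 hp).2) M fun v hv => ?_).trans
      (card_le_card fun p hp => ?_)
  · rw [filter_filter]
    refine (mem_filter.1 hv).2.trans (card_le_card fun p hp => ?_)
    obtain ⟨hpI, rfl⟩ := mem_filter.1 hp
    exact mem_filter.2 ⟨hpI, hv, rfl⟩
  · simp only [mem_filter] at hp ⊢
    exact ⟨hp.1, hp.2.1⟩

lemma card_saturated_le (hcube : NearCubes a n) (hu : (n + 1) ^ 3 ≤ u) :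
    #{v ∈ Icc u (u + 2 * (n + 1) ^ 2) | 4 ≤ repCount a n v} ≤ n := by
  have := (mul_card_saturated_le 4 a n _).trans (card_pairs_sum_mem_Icc_le hcube hu)
  omega

end Window

lemma card_filter_comp_le {α β : Type*} {s : Finset α} {t : Finset β} {φ : α → β}
    (hφ : ∀ x ∈ s, φ x ∈ t) (hinj : Set.InjOn φ s) (P : β → Prop) [DecidablePred P] :
    #{x ∈ s | P (φ x)} ≤ #{y ∈ t | P y} :=
  card_le_card_of_injOn φ
    (fun x hx => mem_filter.2 ⟨hφ x (mem_filter.1 hx).1, (mem_filter.1 hx).2⟩)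
    fun _ hx _ hy => hinj (mem_filter.1 hx).1 (mem_filter.1 hy).1

lemma exists_admissible_mem_Icc {a : ℕ → ℕ} {n : ℕ} (hcube : NearCubes a n) :
    ∃ x ∈ Icc ((n + 1) ^ 3) ((n + 1) ^ 3 + (n + 1) ^ 2), Admissible 4 a n x := by
  set I := Icc ((n + 1) ^ 3) ((n + 1) ^ 3 + (n + 1) ^ 2)
  set excluded := (Icc 1 n).biUnion (fun j => {x ∈ I | 4 ≤ repCount a n (a j + x)}) ∪
    {x ∈ I | 4 ≤ repCount a n (x + x)}
  have hsat {φ : ℕ → ℕ} {u : ℕ} (hu : (n + 1) ^ 3 ≤ u)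
      (hφ : ∀ x ∈ I, φ x ∈ Icc u (u + 2 * (n + 1) ^ 2)) (hinj : Set.InjOn φ I) :
      #{x ∈ I | 4 ≤ repCount a n (φ x)} ≤ n :=
    (card_filter_comp_le hφ hinj (fun v => 4 ≤ repCount a n v)).trans (card_saturated_le hcube hu)
  have htranslate : ∀ j ∈ Icc 1 n, #{x ∈ I | 4 ≤ repCount a n (a j + x)} ≤ n := fun j _ =>
    hsat (u := a j + (n + 1) ^ 3) (by omega)
      (fun x hx => by simp only [I, mem_Icc] at hx ⊢; omega) (add_right_injective _).injOn
  have hdouble : #{x ∈ I | 4 ≤ repCount a n (x + x)} ≤ n :=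
    hsat (φ := fun x => x + x) (u := 2 * (n + 1) ^ 3) (by omega)
      (fun x hx => by simp only [I, mem_Icc] at hx ⊢; omega)
      (fun _ _ _ _ h => by simp only at h; omega)
  have hcard : #excluded < #I := by
    have hexcluded : #excluded ≤ n * n + n := by
      refine (card_union_le _ _).trans (add_le_add (card_biUnion_le.trans
        ((sum_le_card_nsmul _ _ n htranslate).trans_eq ?_)) hdouble)
      rw [Nat.card_Icc, smul_eq_mul, Nat.add_sub_cancel]
    have hI : #I = n * n + 2 * n + 2 := by
      rw [Nat.card_Icc]
      ring_nf
      omega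
    omega
  obtain ⟨x, hxI, hx⟩ := exists_mem_notMem_of_card_lt_card hcard
  refine ⟨x, hxI, fun j hj => ?_, ?_⟩ <;> by_contra! hfull <;> apply hx
  · exact mem_union_left _ (mem_biUnion.2 ⟨j, hj, mem_filter.2 ⟨hxI, hfull⟩⟩)
  · exact mem_union_right _ (mem_filter.2 ⟨hxI, hfull⟩)

-- The truncation only serves well-foundedness; `greedy_succ` removes it.
def greedy : ℕ → ℕ
  | 0 => 0
  | n + 1 => Nat.find (exists_admissible_ge (M := 4) (by norm_num)
      (fun m => if _ : m ≤ n then greedy m else 0) n ((n + 1) ^ 3))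

lemma greedy_succ (n : ℕ) : greedy (n + 1) =
    Nat.find (exists_admissible_ge (M := 4) (by norm_num) greedy n ((n + 1) ^ 3)) := by
  rw [greedy]
  refine Nat.find_congr' (and_congr_right fun _ => admissible_congr fun m hm => ?_)
  simp [show m ≤ n from hm.2]

lemma nearCubes_greedy_and_repCount_le (n : ℕ) :
    NearCubes greedy n ∧ ∀ v, repCount greedy n v ≤ 4 := by
  induction n with
  | zero => exact ⟨by simp [NearCubes], by simp [repCount, indexPairs]⟩
  | succ n ih =>
    obtain ⟨hcube, hrep⟩ := ih
    obtain ⟨x, hxI, hx⟩ := exists_admissible_mem_Icc hcube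
    have hex := exists_admissible_ge (M := 4) (by norm_num) greedy n ((n + 1) ^ 3)
    have hspec := Nat.find_spec hex
    have hmin := Nat.find_min' hex ⟨(mem_Icc.1 hxI).1, hx⟩
    rw [← greedy_succ] at hspec hmin
    have hcube' : NearCubes greedy (n + 1) := fun m hm => by
      rcases Nat.lt_or_ge m (n + 1) with hlt | hge
      · exact hcube m (mem_Icc.2 ⟨(mem_Icc.1 hm).1, by omega⟩)
      · rw [show m = n + 1 by have := (mem_Icc.1 hm).2; omega]
        exact ⟨hspec.1, hmin.trans (mem_Icc.1 hxI).2⟩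
    exact ⟨hcube', repCount_succ_le_of_admissible hcube'.strictMonoOn.injOn hspec.2 hrep⟩

lemma greedy_mem_Icc {m : ℕ} (hm : 1 ≤ m) : m ^ 3 ≤ greedy m ∧ greedy m ≤ m ^ 3 + m ^ 2 :=
  (nearCubes_greedy_and_repCount_le m).1 m (mem_Icc.2 ⟨hm, le_rfl⟩)

lemma strictMonoOn_greedy : StrictMonoOn greedy (Set.Ici 1) := fun _ hm m' hm' hlt =>
  (nearCubes_greedy_and_repCount_le m').1.strictMonoOn ⟨hm, hlt.le⟩ ⟨hm', le_rfl⟩ hlt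

lemma RS_image_le_repCount {a : ℕ → ℕ} (ha : StrictMonoOn a (Set.Ici 1))
    (hle : ∀ m, 1 ≤ m → m ≤ a m) (v : ℕ) : RS (a '' Set.Ici 1) v ≤ repCount a v v := by
  set F := image (Prod.map a a) {p ∈ indexPairs v | a p.1 + a p.2 = v}
  refine (Nat.card_mono (finite_toSet F) ?_).trans
    ((Nat.card_eq_finsetCard F).trans_le card_image_le)
  rintro ⟨_, _⟩ ⟨⟨i, hi, rfl⟩, ⟨j, hj, rfl⟩, hij, hsum⟩
  have hi' : i ≤ a i := hle i hi
  have hj' : j ≤ a j := hle j hj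
  refine mem_coe.2 (mem_image.2 ⟨(i, j), mem_filter.2 ⟨mem_indexPairs.2 ⟨hi, ?_, ?_⟩, hsum⟩, rfl⟩)
  · exact (ha.le_iff_le hi hj).1 hij
  · simp only at hsum; omega

end Greedy

lemma sq_le_rpow_mul_sqrt_log {x : ℝ} (hx : Real.exp 1 ≤ x) :
    x ^ 2 ≤ x ^ ((5 : ℝ) / 2) * Real.sqrt (Real.log x) := by
  have hx1 : 1 ≤ x := (Real.one_le_exp zero_le_one).trans hx
  have hlog : 1 ≤ Real.sqrt (Real.log x) :=
    Real.one_le_sqrt.2 ((Real.le_log_iff_exp_le (by linarith)).2 hx)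
  have hpow : x ^ 2 ≤ x ^ ((5 : ℝ) / 2) := by
    rw [← Real.rpow_two]
    exact Real.rpow_le_rpow_of_exponent_le hx1 (by norm_num)
  nlinarith [Real.rpow_nonneg (zero_le_one.trans hx1) ((5 : ℝ) / 2)]

theorem stmt17 :
    ∃ a : ℕ → ℕ, (∀ m n, 1 ≤ m → m < n → a m < a n) ∧ 0 < a 1 ∧
      (∃ C : ℝ, ∀ᶠ n : ℕ in atTop,
        |(a n : ℝ) - (n : ℝ) ^ 3| ≤ C * (n : ℝ) ^ ((5 : ℝ) / 2) * Real.sqrt (Real.log n)) ∧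
      (∃ M : ℕ, ∀ n : ℕ, RS (a '' Set.Ici 1) n ≤ M) := by
  refine ⟨greedy, fun m n hm hmn => strictMonoOn_greedy hm (hm.trans hmn.le) hmn,
    (greedy_mem_Icc le_rfl).1, ⟨1, ?_⟩, ⟨4, fun v => ?_⟩⟩
  · filter_upwards [eventually_ge_atTop 3] with n hn
    have hn' : Real.exp 1 ≤ n :=
      (Real.exp_one_lt_d9.trans (by norm_num)).le.trans (by exact_mod_cast hn : (3 : ℝ) ≤ n)
    obtain ⟨hlo, hhi⟩ := greedy_mem_Icc (by omega : 1 ≤ n)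
    have hlo' : (n : ℝ) ^ 3 ≤ greedy n := by exact_mod_cast hlo
    have hhi' : (greedy n : ℝ) ≤ n ^ 3 + n ^ 2 := by exact_mod_cast hhi
    rw [one_mul, abs_of_nonneg (by linarith)]
    linarith [sq_le_rpow_mul_sqrt_log hn']
  · exact (RS_image_le_repCount strictMonoOn_greedy
      (fun m hm => (Nat.le_self_pow (by norm_num) m).trans (greedy_mem_Icc hm).1) v).trans
      ((nearCubes_greedy_and_repCount_le v).2 v)
end
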